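/- arXiv:1704.07360 — 4 statements merged into one kernel-verified Lean document; each statement's English description precedes it below -/
import Mathlib

section
/- Let μ ∈ B_α satisfy J(μ) = J_α, and let ρ = dμ_ac/dλ be the Radon–Nikodym derivative of its absolutely continuous part with respect to Lebesgue measure. Then (i) ρ agrees Lebesgue-almost everywhere on [0,1] with a nonincreasing function, and (ii) ρ(x) > 0 for Lebesgue-almost every x ∈ [0,1]. -/
open MeasureTheory

/-- The functional `J(μ) = ∫₀¹ √(dμ_ac/dλ)(x) dx`, where `dμ_ac/dλ` is the
Radon–Nikodym derivative (of the absolutely continuous part of `μ` in its Lebesgue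
decomposition) with respect to Lebesgue measure. -/
noncomputable def Jfun (μ : Measure ℝ) : ℝ :=
  ∫ x in Set.Icc (0:ℝ) 1, Real.sqrt ((μ.rnDeriv volume x).toReal)

/-- `μ ∈ B_α`: a Borel measure on `ℝ` concentrated on `[0,1]`, of total mass at most `1`,
satisfying the area constraint `∫₀¹ μ([0,x]) dx ≥ 1/2 + α`. -/
def memB (α : ℝ) (μ : Measure ℝ) : Prop :=
  μ (Set.Icc (0:ℝ) 1)ᶜ = 0 ∧ μ (Set.Icc (0:ℝ) 1) ≤ 1 ∧
    (1 / 2 + α) ≤ ∫ x in Set.Icc (0:ℝ) 1, (μ (Set.Icc 0 x)).toReal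

/-- `J_α = sup_{μ ∈ B_α} J(μ)`. -/
noncomputable def Jsup (α : ℝ) : ℝ := ⨆ μ : {μ : Measure ℝ // memB α μ}, Jfun μ.1





lemma deficit_key {a t : ℝ} (ha : 0 < a) (ht : 0 ≤ t) :
    4*a*(a * t + (4*a)⁻¹ - Real.sqrt t) = (2*a*Real.sqrt t - 1)^2 := by
  have hs := Real.sq_sqrt ht
  field_simp
  linear_combination (-4*a^2) * hs

/-- pointwise AM-GM: √t ≤ a t + 1/(4a) for a>0, t≥0 -/
lemma sqrt_le_affine {a t : ℝ} (ha : 0 < a) (ht : 0 ≤ t) :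
    Real.sqrt t ≤ a * t + (4*a)⁻¹ := by
  have h := deficit_key ha ht
  nlinarith [sq_nonneg (2*a*Real.sqrt t - 1)]

lemma eq_of_deficit_zero {a t : ℝ} (ha : 0 < a) (ht : 0 ≤ t)
    (h : a * t + (4*a)⁻¹ - Real.sqrt t = 0) : t = (4*a^2)⁻¹ := by
  have hk := deficit_key ha ht
  rw [h, mul_zero] at hk
  have h3 : Real.sqrt t = (2*a)⁻¹ := by
    have := pow_eq_zero_iff (n := 2) (by norm_num) |>.mp hk.symm
    field_simp
    linarith
  have hs := Real.sq_sqrt ht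
  rw [h3] at hs
  rw [← hs]
  field_simp
  ring

lemma affine_pos {p q x : ℝ} (hp : 0 < p) (hq : 0 < q) (hx : 0 ≤ x) : 0 < p + q * x := by
  nlinarith

lemma ftc1 {p q : ℝ} (hp : 0 < p) (hq : 0 < q) :
    ∫ x in (0:ℝ)..1, ((p+q*x)^2)⁻¹ = 1/(p*(p+q)) := by
  have h : ∀ x ∈ Set.uIcc (0:ℝ) 1, HasDerivAt (fun y => -(q⁻¹ * (p+q*y)⁻¹)) (((p+q*x)^2)⁻¹) x := by
    intro x hx
    rw [Set.uIcc_of_le (by norm_num)] at hx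
    have hne : p + q * x ≠ 0 := ne_of_gt (affine_pos hp hq hx.1)
    have h1 : HasDerivAt (fun y => p + q * y) q x := by
      exact (((hasDerivAt_id x).const_mul q).const_add p).congr_deriv (mul_one q)
    have h2 := (h1.inv hne).const_mul q⁻¹
    have h3 := h2.neg
    refine h3.congr_deriv ?_
    field_simp
  have hcont : IntervalIntegrable (fun x => ((p+q*x)^2)⁻¹) MeasureTheory.volume 0 1 := by
    apply ContinuousOn.intervalIntegrable
    apply ContinuousOn.inv₀
    · fun_prop
    · intro x hx
      rw [Set.uIcc_of_le (by norm_num)] at hx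
      exact pow_ne_zero _ (ne_of_gt (affine_pos hp hq hx.1))
  rw [intervalIntegral.integral_eq_sub_of_hasDerivAt h hcont]
  have h1 : p + q * 1 = p + q := by ring
  have hne : p + q ≠ 0 := by positivity
  have hne' : p ≠ 0 := ne_of_gt hp
  field_simp
  ring

lemma ftc2 {p q : ℝ} (hp : 0 < p) (hq : 0 < q) :
    ∫ x in (0:ℝ)..1, x * ((p+q*x)^2)⁻¹ = (Real.log ((p+q)/p) - q/(p+q))/q^2 := by
  have h : ∀ x ∈ Set.uIcc (0:ℝ) 1,
      HasDerivAt (fun y => (Real.log (p+q*y) + p*(p+q*y)⁻¹)/q^2) (x * ((p+q*x)^2)⁻¹) x := by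
    intro x hx
    rw [Set.uIcc_of_le (by norm_num)] at hx
    have hpos : 0 < p + q * x := affine_pos hp hq hx.1
    have hne : p + q * x ≠ 0 := ne_of_gt hpos
    have h1 : HasDerivAt (fun y => p + q * y) q x := by
      exact (((hasDerivAt_id x).const_mul q).const_add p).congr_deriv (mul_one q)
    have h2 := h1.log hne
    have h3 := (h1.inv hne).const_mul p
    have h4 := (h2.add h3).div_const (q^2)
    refine h4.congr_deriv ?_
    field_simp
    ring
  have hcont : IntervalIntegrable (fun x => x * ((p+q*x)^2)⁻¹) MeasureTheory.volume 0 1 := by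
    apply ContinuousOn.intervalIntegrable
    apply ContinuousOn.mul continuousOn_id
    apply ContinuousOn.inv₀
    · fun_prop
    · intro x hx
      rw [Set.uIcc_of_le (by norm_num)] at hx
      exact pow_ne_zero _ (ne_of_gt (affine_pos hp hq hx.1))
  rw [intervalIntegral.integral_eq_sub_of_hasDerivAt h hcont]
  have hne : p + q ≠ 0 := by positivity
  have hne' : p ≠ 0 := ne_of_gt hp
  rw [Real.log_div hne hne']
  have h1 : p + q * 1 = p + q := by ring
  have h0 : p + q * 0 = p := by ring
  rw [h1, h0]
  field_simp
  ring

lemma log_lower {u : ℝ} (hu : 0 < u) (hu' : u ≤ 1/8) :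
    u - u^2/2 - u^3/(1-u) ≤ Real.log (1+u) := by
  have hx : |(-u)| < 1 := by rw [abs_neg, abs_of_nonneg hu.le]; linarith
  have h := Real.abs_log_sub_add_sum_range_le hx 2
  have hsum : ∑ i ∈ Finset.range 2, (-u) ^ (i + 1) / ((i : ℝ) + 1) = -u + u^2/2 := by
    simp [Finset.sum_range_succ]
    ring
  rw [hsum] at h
  have h1 : (1 : ℝ) - -u = 1 + u := by ring
  rw [h1, abs_neg, abs_of_nonneg hu.le] at h
  have h2 := (abs_le.mp h).1
  have h4 : u ^ (2+1) / (1 - u) = u^3/(1-u) := by norm_num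
  rw [h4] at h2
  linarith

lemma construct_pq (r α : ℝ) (hr1 : 1 < r)
    (hfr' : r * Real.log r - r + 1 = (1/2 - α) * (r-1)^2) :
    ∃ p q : ℝ, 0 < p ∧ 0 < q ∧ p*(p+q) = 1/4 ∧
      (Real.log ((p+q)/p) - q/(p+q))/q^2 = 2 - 4*α := by
  have hr0 : 0 < r := by linarith
  have hsq : Real.sqrt r ^ 2 = r := Real.sq_sqrt hr0.le
  have hsq0 : 0 < Real.sqrt r := Real.sqrt_pos.mpr hr0
  have hr1' : (0:ℝ) < r - 1 := by linarith
  refine ⟨1/(2*Real.sqrt r), (1/(2*Real.sqrt r))*(r-1), by positivity, by positivity, ?_, ?_⟩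
  · have hp2 : (1/(2*Real.sqrt r))^2 = 1/(4*r) := by
      rw [div_pow, mul_pow, hsq]; norm_num
    have h11 : (1/(2*Real.sqrt r))*((1/(2*Real.sqrt r)) + (1/(2*Real.sqrt r))*(r-1))
        = (1/(2*Real.sqrt r))^2 * r := by ring
    rw [h11, hp2]
    field_simp
  · obtain ⟨p, hpdef⟩ : ∃ p : ℝ, p = 1/(2*Real.sqrt r) := ⟨_, rfl⟩
    rw [← hpdef]
    have hp0 : 0 < p := by rw [hpdef]; positivity
    have hp2 : p^2 = 1/(4*r) := by rw [hpdef, div_pow, mul_pow, hsq]; norm_num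
    have hsum : p + p*(r-1) = p * r := by ring
    rw [hsum]
    have h1 : p * r / p = r := by field_simp
    have h2 : p*(r-1)/(p*r) = (r-1)/r := mul_div_mul_left _ _ (ne_of_gt hp0)
    rw [h1, h2]
    have h3 : (p*(r-1))^2 = (r-1)^2/(4*r) := by
      rw [mul_pow, hp2]; field_simp
    rw [h3]
    rw [div_eq_iff (by positivity)]
    field_simp
    linear_combination 4 * hfr'

lemma exists_pq (α : ℝ) (hα : α ∈ Set.Ioo (0:ℝ) (1/2)) :
    ∃ p q : ℝ, 0 < p ∧ 0 < q ∧ p*(p+q) = 1/4 ∧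
      (Real.log ((p+q)/p) - q/(p+q))/q^2 = 2 - 4*α := by
  obtain ⟨hα0, hα1⟩ := hα
  obtain ⟨β, hβdef⟩ : ∃ β : ℝ, β = 1/2 - α := ⟨_, rfl⟩
  have hβ0 : 0 < β := by rw [hβdef]; linarith
  have hβ1 : β < 1/2 := by rw [hβdef]; linarith
  obtain ⟨s, hsdef⟩ : ∃ s : ℝ, s = 16/β := ⟨_, rfl⟩
  have hs32 : 32 < s := by
    rw [hsdef, lt_div_iff₀ hβ0]; linarith
  obtain ⟨R, hRdef⟩ : ∃ R : ℝ, R = s^2 := ⟨_, rfl⟩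
  obtain ⟨u, hudef⟩ : ∃ u : ℝ, u = α/4 := ⟨_, rfl⟩
  have hu0 : 0 < u := by rw [hudef]; linarith
  have hu8 : u ≤ 1/8 := by rw [hudef]; linarith
  set f : ℝ → ℝ := fun r => (r * Real.log r - r + 1)/(r-1)^2 with hfdef
  obtain ⟨a₀, ha₀def⟩ : ∃ a₀ : ℝ, a₀ = 1 + u := ⟨_, rfl⟩
  -- lower endpoint
  have hflow : 1/2 - 2*u ≤ f a₀ := by
    have hlog := log_lower hu0 hu8
    have h1u : (0:ℝ) < 1 - u := by linarith
    have hnum : (1/2 - 2*u) * u^2 ≤ (1+u) * Real.log (1+u) - (1+u) + 1 := by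
      have key : (1/2 - 2*u) * u^2 ≤ (1+u) * (u - u^2/2 - u^3/(1-u)) - u := by
        rw [← sub_nonneg]
        have expand : (1+u) * (u - u^2/2 - u^3/(1-u)) - u - (1/2 - 2*u) * u^2
            = u^3 * (3/2 - (1+u)/(1-u)) := by field_simp; ring
        rw [expand]
        have h5 : (1+u)/(1-u) ≤ 3/2 := by rw [div_le_iff₀ h1u]; linarith
        have h3 : 0 ≤ 3/2 - (1+u)/(1-u) := by linarith
        positivity
      have h2 : (1+u) * (u - u^2/2 - u^3/(1-u)) ≤ (1+u) * Real.log (1+u) :=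
        mul_le_mul_of_nonneg_left hlog (by linarith)
      linarith
    rw [hfdef]
    simp only [ha₀def]
    have hden : (1 + u - 1)^2 = u^2 := by ring
    rw [hden, le_div_iff₀ (by positivity)]
    linarith
  -- upper endpoint
  have hfR : f R ≤ β/2 := by
    have hs0 : (0:ℝ) < s := by linarith
    have hR1 : (1:ℝ) < R := by rw [hRdef]; nlinarith
    have hlogR : Real.log R ≤ 2*(s-1) := by
      have hl : Real.log R = 2 * Real.log s := by
        rw [hRdef, Real.log_pow]; push_cast; ring
      rw [hl]
      have := Real.log_le_sub_one_of_pos hs0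
      linarith
    rw [hfdef]
    simp only
    rw [div_le_iff₀ (by nlinarith)]
    have hβs : β = 16/s := by rw [hsdef] at *; field_simp
    have hnum : R * Real.log R - R + 1 ≤ 2*s^2*(s-1) - s^2 + 1 := by
      have h6 : R * Real.log R ≤ R * (2*(s-1)) :=
        mul_le_mul_of_nonneg_left hlogR (by linarith)
      rw [hRdef] at *
      nlinarith
    have hgoal : 2*s^2*(s-1) - s^2 + 1 ≤ β/2 * (R-1)^2 := by
      have heq : β/2 * (R-1)^2 = 8*(s^2-1)^2/s := by
        rw [hβs, hRdef]; field_simp; ring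
      rw [heq, le_div_iff₀ hs0]
      nlinarith
    linarith
  -- continuity
  have ha₀1 : 1 < a₀ := by rw [ha₀def]; linarith
  have ha₀R : a₀ ≤ R := by rw [ha₀def, hRdef, hudef]; nlinarith
  have hcont : ContinuousOn f (Set.Icc a₀ R) := by
    apply ContinuousOn.div
    · apply ContinuousOn.add
      apply ContinuousOn.sub
      · exact continuousOn_id.mul (Real.continuousOn_log.mono (by
          intro x hx
          simp only [Set.mem_compl_iff, Set.mem_singleton_iff]
          have h7 := hx.1
          intro h; rw [h] at h7; linarith))
      · exact continuousOn_id
      · exact continuousOn_const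
    · fun_prop
    · intro x hx
      have h8 := hx.1
      have h9 : (1:ℝ) < x := by linarith
      have : x - 1 > 0 := by linarith
      positivity
  have hmem : β ∈ Set.Icc (f R) (f a₀) := by
    constructor
    · linarith
    · have h10 : β ≤ 1/2 - 2*u := by rw [hβdef, hudef]; linarith
      linarith
  obtain ⟨r, hrmem, hfr⟩ := intermediate_value_Icc' ha₀R hcont hmem
  have hr1 : 1 < r := lt_of_lt_of_le ha₀1 hrmem.1
  have hr0 : 0 < r := by linarith
  apply construct_pq r α hr1
  rw [hfdef] at hfr
  simp only at hfr
  rw [div_eq_iff (pow_ne_zero 2 (sub_ne_zero.mpr (ne_of_gt hr1)))] at hfr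
  rw [hfr, hβdef]

lemma lint_area (μ : Measure ℝ) [IsFiniteMeasure μ] :
    ∫⁻ x in Set.Icc (0:ℝ) 1, μ (Set.Icc 0 x) ∂volume
      = ∫⁻ t in Set.Icc (0:ℝ) 1, ENNReal.ofReal (1-t) ∂μ := by
  have hI : MeasurableSet (Set.Icc (0:ℝ) 1) := measurableSet_Icc
  have hS : MeasurableSet {p : ℝ × ℝ | 0 ≤ p.2 ∧ p.2 ≤ p.1} :=
    ((isClosed_le continuous_const continuous_snd).inter
      (isClosed_le continuous_snd continuous_fst)).measurableSet
  set F : ℝ → ℝ → ENNReal := fun x t => ({p : ℝ × ℝ | 0 ≤ p.2 ∧ p.2 ≤ p.1}).indicator 1 (x, t)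
    with hF
  have stepA : ∀ x ∈ Set.Icc (0:ℝ) 1, μ (Set.Icc 0 x) = ∫⁻ t, F x t ∂(μ.restrict (Set.Icc 0 1)) := by
    intro x hx
    have hset : {t : ℝ | 0 ≤ t ∧ t ≤ x} = Set.Icc 0 x := by
      ext t; simp [Set.mem_Icc]
    have : (fun t => F x t) = (Set.Icc 0 x).indicator 1 := by
      funext t
      rw [hF]
      simp only
      by_cases ht : t ∈ Set.Icc 0 x
      · rw [Set.indicator_of_mem ht]
        rw [Set.indicator_of_mem]
        · rfl
        · simp only [Set.mem_setOf_eq]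
          exact ⟨ht.1, ht.2⟩
      · rw [Set.indicator_of_notMem ht, Set.indicator_of_notMem]
        simp only [Set.mem_setOf_eq]
        intro hc
        exact ht ⟨hc.1, hc.2⟩
    rw [this, lintegral_indicator_one measurableSet_Icc,
      Measure.restrict_apply measurableSet_Icc,
      Set.inter_eq_self_of_subset_left (Set.Icc_subset_Icc le_rfl hx.2)]
  have stepD : ∀ t ∈ Set.Icc (0:ℝ) 1,
      ∫⁻ x, F x t ∂(volume.restrict (Set.Icc 0 1)) = ENNReal.ofReal (1-t) := by
    intro t ht
    have : (fun x => F x t) = (Set.Ici t).indicator 1 := by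
      funext x
      rw [hF]
      simp only
      by_cases hx : x ∈ Set.Ici t
      · rw [Set.indicator_of_mem hx, Set.indicator_of_mem]
        · rfl
        · exact ⟨ht.1, hx⟩
      · rw [Set.indicator_of_notMem hx, Set.indicator_of_notMem]
        intro hc
        exact hx hc.2
    rw [this, lintegral_indicator_one measurableSet_Ici,
      Measure.restrict_apply measurableSet_Ici]
    have hseteq : Set.Ici t ∩ Set.Icc 0 1 = Set.Icc t 1 := by
      ext y
      simp only [Set.mem_inter_iff, Set.mem_Ici, Set.mem_Icc]
      constructor
      · rintro ⟨h1, _, h3⟩; exact ⟨h1, h3⟩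
      · rintro ⟨h1, h2⟩; exact ⟨h1, le_trans ht.1 h1, h2⟩
    rw [hseteq, Real.volume_Icc]
  have hmeas : AEMeasurable (Function.uncurry F)
      ((volume.restrict (Set.Icc (0:ℝ) 1)).prod (μ.restrict (Set.Icc (0:ℝ) 1))) := by
    apply Measurable.aemeasurable
    exact measurable_one.indicator hS
  calc ∫⁻ x in Set.Icc (0:ℝ) 1, μ (Set.Icc 0 x) ∂volume
      = ∫⁻ x in Set.Icc (0:ℝ) 1, (∫⁻ t, F x t ∂(μ.restrict (Set.Icc 0 1))) ∂volume := by
        apply setLIntegral_congr_fun hI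
        exact stepA
    _ = ∫⁻ t, (∫⁻ x, F x t ∂(volume.restrict (Set.Icc 0 1))) ∂(μ.restrict (Set.Icc 0 1)) :=
        lintegral_lintegral_swap hmeas
    _ = ∫⁻ t in Set.Icc (0:ℝ) 1, ENNReal.ofReal (1-t) ∂μ := by
        apply setLIntegral_congr_fun hI
        exact stepD

lemma area_real (μ : Measure ℝ) [IsFiniteMeasure μ] :
    ∫ x in Set.Icc (0:ℝ) 1, (μ (Set.Icc 0 x)).toReal ∂volume
      = ∫ t in Set.Icc (0:ℝ) 1, (1-t) ∂μ := by
  have hI : MeasurableSet (Set.Icc (0:ℝ) 1) := measurableSet_Icc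
  have hmono : Monotone (fun x : ℝ => μ (Set.Icc 0 x)) :=
    fun x y hxy => measure_mono (Set.Icc_subset_Icc le_rfl hxy)
  have h1 : ∫ x in Set.Icc (0:ℝ) 1, (μ (Set.Icc 0 x)).toReal ∂volume
      = (∫⁻ x in Set.Icc (0:ℝ) 1, μ (Set.Icc 0 x) ∂volume).toReal := by
    apply integral_toReal
    · exact hmono.measurable.aemeasurable
    · exact ae_of_all _ fun x => measure_lt_top μ _
  have h2 : ∫ t in Set.Icc (0:ℝ) 1, (1-t) ∂μ
      = (∫⁻ t in Set.Icc (0:ℝ) 1, ENNReal.ofReal (1-t) ∂μ).toReal := by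
    apply integral_eq_lintegral_of_nonneg_ae
    · apply (ae_restrict_iff' hI).mpr
      exact ae_of_all _ fun t ht => by simp only [Pi.zero_apply, Pi.one_apply]; linarith [ht.2]
    · exact (continuous_const.sub continuous_id).aestronglyMeasurable
  rw [h1, h2, lint_area]

/-- The linear-functional bound for any measure in `B_α`. -/
lemma W_le (α p q : ℝ) (hp : 0 < p) (hq : 0 < q) (μ : Measure ℝ) [IsFiniteMeasure μ]
    (h1 : μ (Set.Icc (0:ℝ) 1) ≤ 1)
    (h2 : (1 / 2 + α) ≤ ∫ x in Set.Icc (0:ℝ) 1, (μ (Set.Icc 0 x)).toReal) :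
    ∫ x in Set.Icc (0:ℝ) 1, (p + q*x) * (μ.rnDeriv volume x).toReal
      ≤ (p + q) - q * (1/2 + α) := by
  have hI : MeasurableSet (Set.Icc (0:ℝ) 1) := measurableSet_Icc
  have hrnm : Measurable (μ.rnDeriv volume) := Measure.measurable_rnDeriv μ volume
  have ham : Measurable (fun x : ℝ => p + q * x) := by fun_prop
  -- Step 1: rewrite as lintegral
  have step1 : ∫ x in Set.Icc (0:ℝ) 1, (p + q*x) * (μ.rnDeriv volume x).toReal
      = (∫⁻ x in Set.Icc (0:ℝ) 1,
          ENNReal.ofReal (p + q*x) * μ.rnDeriv volume x ∂volume).toReal := by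
    rw [integral_eq_lintegral_of_nonneg_ae]
    · congr 1
      apply lintegral_congr_ae
      have hfin : ∀ᵐ x ∂(volume.restrict (Set.Icc (0:ℝ) 1)), μ.rnDeriv volume x < ⊤ :=
        ae_restrict_of_ae (Measure.rnDeriv_lt_top μ volume)
      filter_upwards [hfin, ae_restrict_mem hI] with x hx hxm
      rw [ENNReal.ofReal_mul (by nlinarith [hxm.1] : (0:ℝ) ≤ p + q * x),
        ENNReal.ofReal_toReal hx.ne]
    · apply (ae_restrict_iff' hI).mpr
      refine ae_of_all _ fun x hx => ?_
      have : (0:ℝ) ≤ p + q * x := by nlinarith [hx.1]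
      exact mul_nonneg this ENNReal.toReal_nonneg
    · exact ((ham.mul hrnm.ennreal_toReal).aestronglyMeasurable).restrict
  -- Step 2: move the density to the measure
  have step2 : ∫⁻ x in Set.Icc (0:ℝ) 1, ENNReal.ofReal (p + q*x) * μ.rnDeriv volume x ∂volume
      = ∫⁻ x in Set.Icc (0:ℝ) 1, ENNReal.ofReal (p + q*x)
          ∂(volume.withDensity (μ.rnDeriv volume)) := by
    rw [restrict_withDensity hI]
    rw [lintegral_withDensity_eq_lintegral_mul _ hrnm (by fun_prop)]
    apply lintegral_congr
    intro x
    simp [mul_comm]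
  -- Step 3: withDensity rnDeriv ≤ μ
  have step3 : ∫⁻ x in Set.Icc (0:ℝ) 1, ENNReal.ofReal (p + q*x)
          ∂(volume.withDensity (μ.rnDeriv volume))
      ≤ ∫⁻ x in Set.Icc (0:ℝ) 1, ENNReal.ofReal (p + q*x) ∂μ :=
    lintegral_mono' (Measure.restrict_mono (subset_refl _)
      (Measure.withDensity_rnDeriv_le μ volume)) le_rfl
  -- Step 4: back to a real integral against μ
  have hinta : Integrable (fun x : ℝ => p + q*x) (μ.restrict (Set.Icc (0:ℝ) 1)) := by
    apply Integrable.mono' (integrable_const (p+q)) (ham.aestronglyMeasurable).restrict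
    apply (ae_restrict_iff' hI).mpr
    refine ae_of_all _ fun x hx => ?_
    rw [Real.norm_eq_abs, abs_of_nonneg (by nlinarith [hx.1])]
    nlinarith [hx.2]
  have step4 : ∫⁻ x in Set.Icc (0:ℝ) 1, ENNReal.ofReal (p + q*x) ∂μ
      = ENNReal.ofReal (∫ x in Set.Icc (0:ℝ) 1, (p + q*x) ∂μ) := by
    rw [ofReal_integral_eq_lintegral_ofReal hinta]
    apply (ae_restrict_iff' hI).mpr
    exact ae_of_all _ fun x hx => by simp only [Pi.zero_apply]; nlinarith [hx.1]
  -- Step 5: bound the real integral against μ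
  have hint1 : Integrable (fun x : ℝ => 1 - x) (μ.restrict (Set.Icc (0:ℝ) 1)) := by
    apply Integrable.mono' (integrable_const 1)
      ((continuous_const.sub continuous_id').aestronglyMeasurable).restrict
    apply (ae_restrict_iff' hI).mpr
    refine ae_of_all _ fun x hx => ?_
    simp only [Pi.sub_apply]
    rw [Real.norm_eq_abs, abs_of_nonneg (by linarith [hx.2])]
    linarith [hx.1]
  have harea : (1/2 + α) ≤ ∫ t in Set.Icc (0:ℝ) 1, (1 - t) ∂μ := by
    rw [← area_real μ]; exact h2
  have hmass : (μ (Set.Icc (0:ℝ) 1)).toReal ≤ 1 :=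
    le_trans (ENNReal.toReal_mono (by norm_num) h1) (by norm_num)
  have step5 : ∫ x in Set.Icc (0:ℝ) 1, (p + q*x) ∂μ ≤ (p + q) - q * (1/2 + α) := by
    have hptw : ∀ x : ℝ, p + q*x = (p + q) - q * (1 - x) := fun x => by ring
    have : ∫ x in Set.Icc (0:ℝ) 1, (p + q*x) ∂μ
        = ∫ x in Set.Icc (0:ℝ) 1, ((p+q) - q * (1-x)) ∂μ := by
      congr 1; funext x; rw [hptw]
    rw [this, integral_sub (integrable_const _) (hint1.const_mul q),
      integral_const, integral_const_mul, measureReal_restrict_apply_univ]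
    have hq' : q * (1/2 + α) ≤ q * ∫ x in Set.Icc (0:ℝ) 1, (1-x) ∂μ :=
      mul_le_mul_of_nonneg_left harea hq.le
    have hpq0 : (0:ℝ) ≤ p + q := by linarith
    have := mul_le_mul_of_nonneg_right hmass hpq0
    simp only [smul_eq_mul, Measure.real]
    nlinarith [ENNReal.toReal_nonneg (a := μ (Set.Icc (0:ℝ) 1))]
  -- combine
  rw [step1]
  calc (∫⁻ x in Set.Icc (0:ℝ) 1,
          ENNReal.ofReal (p + q*x) * μ.rnDeriv volume x ∂volume).toReal
      ≤ (ENNReal.ofReal (∫ x in Set.Icc (0:ℝ) 1, (p + q*x) ∂μ)).toReal := by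
        apply ENNReal.toReal_mono ENNReal.ofReal_ne_top
        rw [step2, ← step4]
        exact step3
    _ ≤ (p + q) - q * (1/2 + α) := by
        have hnn : (0:ℝ) ≤ ∫ x in Set.Icc (0:ℝ) 1, (p + q*x) ∂μ := by
          apply integral_nonneg_of_ae
          apply (ae_restrict_iff' hI).mpr
          exact ae_of_all _ fun x hx => by simp only [Pi.zero_apply]; nlinarith [hx.1]
        rw [ENNReal.toReal_ofReal hnn]
        exact step5

lemma finite_of_memB {α : ℝ} {μ : Measure ℝ} (hμ : memB α μ) : IsFiniteMeasure μ := by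
  constructor
  calc μ Set.univ = μ (Set.Icc (0:ℝ) 1 ∪ (Set.Icc (0:ℝ) 1)ᶜ) := by
        rw [Set.union_compl_self]
    _ ≤ μ (Set.Icc (0:ℝ) 1) + μ (Set.Icc (0:ℝ) 1)ᶜ := measure_union_le _ _
    _ ≤ 1 + 0 := add_le_add hμ.2.1 hμ.1.le
    _ < ⊤ := by norm_num

lemma F1_eq {p q : ℝ} (hp : 0 < p) (hq : 0 < q) (hpq : p*(p+q) = 1/4) :
    ∫ x in Set.Icc (0:ℝ) 1, (4*(p+q*x)^2)⁻¹ = 1 := by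
  rw [integral_Icc_eq_integral_Ioc, ← intervalIntegral.integral_of_le zero_le_one]
  have hpt : ∀ x : ℝ, (4*(p+q*x)^2)⁻¹ = (4:ℝ)⁻¹ * ((p+q*x)^2)⁻¹ := fun x => by
    rw [mul_inv]
  simp only [hpt]
  rw [intervalIntegral.integral_const_mul, ftc1 hp hq, hpq]
  norm_num

lemma F2_eq {α p q : ℝ} (hp : 0 < p) (hq : 0 < q)
    (hcon : (Real.log ((p+q)/p) - q/(p+q))/q^2 = 2 - 4*α) :
    ∫ x in Set.Icc (0:ℝ) 1, x * (4*(p+q*x)^2)⁻¹ = 1/2 - α := by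
  rw [integral_Icc_eq_integral_Ioc, ← intervalIntegral.integral_of_le zero_le_one]
  have hpt : ∀ x : ℝ, x * (4*(p+q*x)^2)⁻¹ = (4:ℝ)⁻¹ * (x * ((p+q*x)^2)⁻¹) := fun x => by
    rw [mul_inv]; ring
  simp only [hpt]
  rw [intervalIntegral.integral_const_mul, ftc2 hp hq, hcon]
  ring

/-- Construction of the maximizing measure. -/
lemma exists_opt (α p q : ℝ) (hp : 0 < p) (hq : 0 < q)
    (F1 : ∫ x in Set.Icc (0:ℝ) 1, (4*(p+q*x)^2)⁻¹ = 1)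
    (F2 : ∫ x in Set.Icc (0:ℝ) 1, x * (4*(p+q*x)^2)⁻¹ = 1/2 - α) :
    ∃ ν : Measure ℝ, memB α ν ∧
      Jfun ν = ((p+q) - q*(1/2+α)) + ∫ x in Set.Icc (0:ℝ) 1, (4*(p+q*x))⁻¹ := by
  have hI : MeasurableSet (Set.Icc (0:ℝ) 1) := measurableSet_Icc
  have hbase : Measurable (fun x : ℝ => (4*(p+q*x)^2)⁻¹) := by
    have h : Measurable (fun x : ℝ => 4*(p+q*x)^2) := by fun_prop
    exact h.inv
  set f : ℝ → NNReal :=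
    fun x => (Set.Icc (0:ℝ) 1).indicator (fun x => Real.toNNReal ((4*(p+q*x)^2)⁻¹)) x with hfdef
  have hfm : Measurable f := (Measurable.real_toNNReal hbase).indicator hI
  have hfe : Measurable (fun x => (f x : ENNReal)) := measurable_coe_nnreal_ennreal.comp hfm
  set ν : Measure ℝ := volume.withDensity (fun x => (f x : ENNReal)) with hνdef
  have hpos : ∀ x ∈ Set.Icc (0:ℝ) 1, 0 < p + q * x := fun x hx => by nlinarith [hx.1]
  have hcoe : ∀ x ∈ Set.Icc (0:ℝ) 1, ((f x : ENNReal)) = ENNReal.ofReal ((4*(p+q*x)^2)⁻¹) := by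
    intro x hx
    rw [hfdef]
    simp only [Set.indicator_of_mem hx]
    rfl
  have htoReal : ∀ x ∈ Set.Icc (0:ℝ) 1, ((f x : ENNReal)).toReal = (4*(p+q*x)^2)⁻¹ := by
    intro x hx
    rw [hfdef]
    simp only [Set.indicator_of_mem hx, ENNReal.coe_toReal]
    exact Real.coe_toNNReal _ (by positivity)
  -- integrability of various continuous functions on Icc
  have hiρ : IntegrableOn (fun x : ℝ => (4*(p+q*x)^2)⁻¹) (Set.Icc 0 1) volume := by
    apply ContinuousOn.integrableOn_Icc
    apply ContinuousOn.inv₀ (by fun_prop)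
    intro x hx
    have := hpos x hx
    positivity
  have hixρ : IntegrableOn (fun x : ℝ => x * (4*(p+q*x)^2)⁻¹) (Set.Icc 0 1) volume := by
    apply ContinuousOn.integrableOn_Icc
    apply ContinuousOn.mul continuousOn_id
    apply ContinuousOn.inv₀ (by fun_prop)
    intro x hx
    have := hpos x hx
    positivity
  have hiinv : IntegrableOn (fun x : ℝ => (4*(p+q*x))⁻¹) (Set.Icc 0 1) volume := by
    apply ContinuousOn.integrableOn_Icc
    apply ContinuousOn.inv₀ (by fun_prop)
    intro x hx
    have := hpos x hx
    positivity
  have hiaρ : IntegrableOn (fun x : ℝ => (p+q*x) * (4*(p+q*x)^2)⁻¹) (Set.Icc 0 1) volume := by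
    apply ContinuousOn.integrableOn_Icc
    apply ContinuousOn.mul (by fun_prop)
    apply ContinuousOn.inv₀ (by fun_prop)
    intro x hx
    have := hpos x hx
    positivity
  -- complement has measure zero
  have hν_compl : ν (Set.Icc (0:ℝ) 1)ᶜ = 0 := by
    rw [hνdef, withDensity_apply _ hI.compl]
    have : ∫⁻ x in (Set.Icc (0:ℝ) 1)ᶜ, ((f x : ENNReal)) ∂volume
        = ∫⁻ _ in (Set.Icc (0:ℝ) 1)ᶜ, 0 ∂volume := by
      apply setLIntegral_congr_fun hI.compl
      refine fun x hx => ?_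
      rw [hfdef]
      simp only [Set.indicator_of_notMem hx, ENNReal.coe_zero]
    rw [this, lintegral_zero]
  -- mass
  have hmass : ν (Set.Icc (0:ℝ) 1) = 1 := by
    rw [hνdef, withDensity_apply _ hI]
    rw [setLIntegral_congr_fun hI hcoe]
    rw [← ofReal_integral_eq_lintegral_ofReal hiρ (ae_of_all _ fun x => by positivity)]
    rw [F1, ENNReal.ofReal_one]
  haveI hfin : IsFiniteMeasure ν := by
    constructor
    calc ν Set.univ = ν (Set.Icc (0:ℝ) 1 ∪ (Set.Icc (0:ℝ) 1)ᶜ) := by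
          rw [Set.union_compl_self]
      _ ≤ ν (Set.Icc (0:ℝ) 1) + ν (Set.Icc (0:ℝ) 1)ᶜ := measure_union_le _ _
      _ = 1 := by rw [hmass, hν_compl, add_zero]
      _ < ⊤ := by norm_num
  -- area
  have hrestr : ν.restrict (Set.Icc (0:ℝ) 1)
      = (volume.restrict (Set.Icc (0:ℝ) 1)).withDensity (fun x => (f x : ENNReal)) := by
    rw [hνdef]; exact restrict_withDensity hI _
  have harea : ∫ t in Set.Icc (0:ℝ) 1, (1-t) ∂ν = 1/2 + α := by
    show ∫ t, (1-t) ∂(ν.restrict (Set.Icc (0:ℝ) 1)) = 1/2 + α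
    rw [hrestr, integral_withDensity_eq_integral_smul hfm]
    have : ∫ x, f x • (1-x) ∂(volume.restrict (Set.Icc (0:ℝ) 1))
        = ∫ x in Set.Icc (0:ℝ) 1,
            ((4*(p+q*x)^2)⁻¹ - x * (4*(p+q*x)^2)⁻¹) ∂volume := by
      apply setIntegral_congr_fun hI
      intro x hx
      have h1 : (f x : ℝ) = (4*(p+q*x)^2)⁻¹ := by
        rw [hfdef]
        simp only [Set.indicator_of_mem hx]
        exact Real.coe_toNNReal _ (by positivity)
      simp only [NNReal.smul_def, smul_eq_mul]
      rw [h1]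
      ring
    rw [this, integral_sub hiρ hixρ, F1, F2]
    ring
  have hmemB : memB α ν := by
    refine ⟨hν_compl, hmass.le, ?_⟩
    rw [area_real ν, harea]
  refine ⟨ν, hmemB, ?_⟩
  -- the value of J at ν
  have hrn : ν.rnDeriv volume =ᵐ[volume] (fun x => (f x : ENNReal)) :=
    Measure.rnDeriv_withDensity volume hfe
  have hJ1 : Jfun ν = ∫ x in Set.Icc (0:ℝ) 1, Real.sqrt (((f x : ENNReal)).toReal) := by
    unfold Jfun
    apply integral_congr_ae
    apply ae_restrict_of_ae
    filter_upwards [hrn] with x hx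
    rw [hx]
  rw [hJ1]
  have hJ2 : ∫ x in Set.Icc (0:ℝ) 1, Real.sqrt (((f x : ENNReal)).toReal)
      = ∫ x in Set.Icc (0:ℝ) 1,
          ((p+q*x) * (4*(p+q*x)^2)⁻¹ + (4*(p+q*x))⁻¹) ∂volume := by
    apply setIntegral_congr_fun hI
    intro x hx
    have hx0 := hpos x hx
    show Real.sqrt (((f x : ENNReal)).toReal)
      = (p+q*x) * (4*(p+q*x)^2)⁻¹ + (4*(p+q*x))⁻¹
    rw [htoReal x hx]
    rw [show (4:ℝ)*(p+q*x)^2 = (2*(p+q*x))^2 by ring, Real.sqrt_inv,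
      Real.sqrt_sq (by linarith)]
    rw [show (2*(p+q*x))^2 = 4*(p+q*x)^2 by ring]
    field_simp
    ring
  rw [hJ2, integral_add hiaρ hiinv]
  have hJ3 : ∫ x in Set.Icc (0:ℝ) 1, (p+q*x) * (4*(p+q*x)^2)⁻¹ ∂volume
      = ((p+q) - q*(1/2+α)) := by
    have : ∫ x in Set.Icc (0:ℝ) 1, (p+q*x) * (4*(p+q*x)^2)⁻¹ ∂volume
        = ∫ x in Set.Icc (0:ℝ) 1,
            (p * (4*(p+q*x)^2)⁻¹ + q * (x * (4*(p+q*x)^2)⁻¹)) ∂volume := by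
      apply setIntegral_congr_fun hI
      intro x _
      ring
    rw [this, integral_add (hiρ.const_mul p) (hixρ.const_mul q),
      integral_const_mul, integral_const_mul, F1, F2]
    ring
  rw [hJ3]

/-- The fundamental inequality: for any measure in `B_α`,
`J(μ) + ∫ deficit ≤ V`. -/
lemma J_le_V (α p q : ℝ) (hp : 0 < p) (hq : 0 < q) (μ : Measure ℝ) (hμ : memB α μ) :
    Jfun μ + (∫ x in Set.Icc (0:ℝ) 1,
        ((p+q*x) * (μ.rnDeriv volume x).toReal + (4*(p+q*x))⁻¹
          - Real.sqrt ((μ.rnDeriv volume x).toReal)) ∂volume)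
      ≤ ((p+q) - q*(1/2+α)) + ∫ x in Set.Icc (0:ℝ) 1, (4*(p+q*x))⁻¹ ∂volume := by
  have hI : MeasurableSet (Set.Icc (0:ℝ) 1) := measurableSet_Icc
  haveI : IsFiniteMeasure μ := finite_of_memB hμ
  have hpos : ∀ x ∈ Set.Icc (0:ℝ) 1, 0 < p + q * x := fun x hx => by nlinarith [hx.1]
  have hρm : Measurable (fun x => (μ.rnDeriv volume x).toReal) :=
    (Measure.measurable_rnDeriv μ volume).ennreal_toReal
  have hiρ : IntegrableOn (fun x => (μ.rnDeriv volume x).toReal) (Set.Icc 0 1) volume :=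
    (Measure.integrable_toReal_rnDeriv).integrableOn
  have hisqrt : IntegrableOn (fun x => Real.sqrt ((μ.rnDeriv volume x).toReal))
      (Set.Icc 0 1) volume := by
    refine Integrable.mono' (g := fun x => 1 + (μ.rnDeriv volume x).toReal)
      ((integrable_const 1).add hiρ) ?_ ?_
    · exact ((Real.continuous_sqrt.measurable.comp hρm).aestronglyMeasurable).restrict
    refine ae_of_all _ fun x => ?_
    rw [Real.norm_eq_abs, abs_of_nonneg (Real.sqrt_nonneg _)]
    have h0 : (0:ℝ) ≤ (μ.rnDeriv volume x).toReal := ENNReal.toReal_nonneg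
    calc Real.sqrt ((μ.rnDeriv volume x).toReal)
        ≤ Real.sqrt ((1 + (μ.rnDeriv volume x).toReal)^2) := by
          apply Real.sqrt_le_sqrt; nlinarith
      _ = 1 + (μ.rnDeriv volume x).toReal := Real.sqrt_sq (by linarith)
  have hiaρ : IntegrableOn (fun x => (p+q*x) * (μ.rnDeriv volume x).toReal)
      (Set.Icc 0 1) volume := by
    refine Integrable.mono' (g := fun x => (p+q) * (μ.rnDeriv volume x).toReal)
      (hiρ.const_mul (p+q)) ?_ ?_
    · exact (((show Measurable (fun x : ℝ => p + q*x) by fun_prop).mul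
        hρm).aestronglyMeasurable).restrict
    apply (ae_restrict_iff' hI).mpr
    refine ae_of_all _ fun x hx => ?_
    rw [Real.norm_eq_abs, abs_of_nonneg (mul_nonneg (hpos x hx).le ENNReal.toReal_nonneg)]
    have h0 := ENNReal.toReal_nonneg (a := μ.rnDeriv volume x)
    apply mul_le_mul_of_nonneg_right _ h0
    nlinarith [hx.2]
  have hiinv : IntegrableOn (fun x : ℝ => (4*(p+q*x))⁻¹) (Set.Icc 0 1) volume := by
    apply ContinuousOn.integrableOn_Icc
    apply ContinuousOn.inv₀ (by fun_prop)
    intro x hx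
    have := hpos x hx
    positivity
  -- J + D = W + C
  have hkey : Jfun μ + (∫ x in Set.Icc (0:ℝ) 1,
        ((p+q*x) * (μ.rnDeriv volume x).toReal + (4*(p+q*x))⁻¹
          - Real.sqrt ((μ.rnDeriv volume x).toReal)) ∂volume)
      = (∫ x in Set.Icc (0:ℝ) 1, (p+q*x) * (μ.rnDeriv volume x).toReal ∂volume)
        + ∫ x in Set.Icc (0:ℝ) 1, (4*(p+q*x))⁻¹ ∂volume := by
    have e1 : ∫ x in Set.Icc (0:ℝ) 1,
          ((p+q*x) * (μ.rnDeriv volume x).toReal + (4*(p+q*x))⁻¹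
            - Real.sqrt ((μ.rnDeriv volume x).toReal)) ∂volume
        = (∫ x in Set.Icc (0:ℝ) 1,
            ((p+q*x) * (μ.rnDeriv volume x).toReal + (4*(p+q*x))⁻¹) ∂volume)
          - ∫ x in Set.Icc (0:ℝ) 1, Real.sqrt ((μ.rnDeriv volume x).toReal) ∂volume :=
      integral_sub (hiaρ.add hiinv) hisqrt
    have e2 : ∫ x in Set.Icc (0:ℝ) 1,
          ((p+q*x) * (μ.rnDeriv volume x).toReal + (4*(p+q*x))⁻¹) ∂volume
        = (∫ x in Set.Icc (0:ℝ) 1, (p+q*x) * (μ.rnDeriv volume x).toReal ∂volume)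
          + ∫ x in Set.Icc (0:ℝ) 1, (4*(p+q*x))⁻¹ ∂volume :=
      integral_add hiaρ hiinv
    unfold Jfun
    rw [e1, e2]
    ring
  rw [hkey]
  have := W_le α p q hp hq μ hμ.2.1 hμ.2.2
  linarith

lemma D_nonneg (p q : ℝ) (hp : 0 < p) (hq : 0 < q) (μ : Measure ℝ) :
    0 ≤ ∫ x in Set.Icc (0:ℝ) 1,
        ((p+q*x) * (μ.rnDeriv volume x).toReal + (4*(p+q*x))⁻¹
          - Real.sqrt ((μ.rnDeriv volume x).toReal)) ∂volume := by
  have hI : MeasurableSet (Set.Icc (0:ℝ) 1) := measurableSet_Icc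
  apply integral_nonneg_of_ae
  apply (ae_restrict_iff' hI).mpr
  refine ae_of_all _ fun x hx => ?_
  have hx0 : 0 < p + q * x := by nlinarith [hx.1]
  have := sqrt_le_affine (a := p + q*x) (t := (μ.rnDeriv volume x).toReal)
    hx0 ENNReal.toReal_nonneg
  simp only [Pi.zero_apply]
  linarith

/-- For a maximizer `μ ∈ B_α` of `J`, the Radon–Nikodym derivative
`ρ = dμ_ac/dλ` agrees Lebesgue-a.e. on `[0,1]` with a nonincreasing function, and is
positive Lebesgue-a.e. on `[0,1]`. -/
theorem stmt12 (α : ℝ) (hα : α ∈ Set.Ioo (0 : ℝ) (1 / 2)) (μ : Measure ℝ)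
    (hμ : memB α μ) (hopt : Jfun μ = Jsup α) :
    (∃ g : ℝ → ℝ, AntitoneOn g (Set.Icc (0:ℝ) 1) ∧
      ∀ᵐ x ∂(volume.restrict (Set.Icc (0:ℝ) 1)),
        (μ.rnDeriv volume x).toReal = g x) ∧
    (∀ᵐ x ∂(volume.restrict (Set.Icc (0:ℝ) 1)),
        0 < (μ.rnDeriv volume x).toReal) := by
  obtain ⟨p, q, hp, hq, hpq, hcon⟩ := exists_pq α hα
  have hI : MeasurableSet (Set.Icc (0:ℝ) 1) := measurableSet_Icc
  haveI : IsFiniteMeasure μ := finite_of_memB hμ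
  have hpos : ∀ x ∈ Set.Icc (0:ℝ) 1, 0 < p + q * x := fun x hx => by nlinarith [hx.1]
  have F1 := F1_eq hp hq hpq
  have F2 := F2_eq hp hq hcon
  obtain ⟨ν, hν, hJν⟩ := exists_opt α p q hp hq F1 F2
  -- the value of the supremum
  have hub : ∀ σ : {m : Measure ℝ // memB α m},
      Jfun σ.1 ≤ ((p+q) - q*(1/2+α)) + ∫ x in Set.Icc (0:ℝ) 1, (4*(p+q*x))⁻¹ := by
    rintro ⟨m, hm⟩
    have h1 := J_le_V α p q hp hq m hm
    have h2 := D_nonneg p q hp hq m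
    simp only at h1 h2 ⊢
    linarith
  haveI : Nonempty {m : Measure ℝ // memB α m} := ⟨⟨ν, hν⟩⟩
  have hbdd : BddAbove (Set.range fun σ : {m : Measure ℝ // memB α m} => Jfun σ.1) := by
    refine ⟨((p+q) - q*(1/2+α)) + ∫ x in Set.Icc (0:ℝ) 1, (4*(p+q*x))⁻¹, ?_⟩
    rintro y ⟨σ, rfl⟩
    exact hub σ
  have hsup : Jsup α = ((p+q) - q*(1/2+α)) + ∫ x in Set.Icc (0:ℝ) 1, (4*(p+q*x))⁻¹ := by
    apply le_antisymm (ciSup_le hub)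
    rw [← hJν]
    exact le_ciSup hbdd ⟨ν, hν⟩
  -- the deficit integral vanishes
  have hJμ := J_le_V α p q hp hq μ hμ
  have hD := D_nonneg p q hp hq μ
  rw [hopt, hsup] at hJμ
  have hD0 : ∫ x in Set.Icc (0:ℝ) 1,
      ((p+q*x) * (μ.rnDeriv volume x).toReal + (4*(p+q*x))⁻¹
        - Real.sqrt ((μ.rnDeriv volume x).toReal)) ∂volume = 0 := le_antisymm (by linarith) hD
  -- hence the deficit is a.e. zero
  have hd_nonneg : 0 ≤ᶠ[ae (volume.restrict (Set.Icc (0:ℝ) 1))]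
      (fun x => (p+q*x) * (μ.rnDeriv volume x).toReal + (4*(p+q*x))⁻¹
        - Real.sqrt ((μ.rnDeriv volume x).toReal)) := by
    apply (ae_restrict_iff' hI).mpr
    refine ae_of_all _ fun x hx => ?_
    have hx0 := hpos x hx
    have := sqrt_le_affine (a := p + q*x) (t := (μ.rnDeriv volume x).toReal)
      hx0 ENNReal.toReal_nonneg
    simp only [Pi.zero_apply]
    linarith
  have hρm : Measurable (fun x => (μ.rnDeriv volume x).toReal) :=
    (Measure.measurable_rnDeriv μ volume).ennreal_toReal
  have hiρ : IntegrableOn (fun x => (μ.rnDeriv volume x).toReal) (Set.Icc 0 1) volume :=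
    (Measure.integrable_toReal_rnDeriv).integrableOn
  have hisqrt : IntegrableOn (fun x => Real.sqrt ((μ.rnDeriv volume x).toReal))
      (Set.Icc 0 1) volume := by
    refine Integrable.mono' (g := fun x => 1 + (μ.rnDeriv volume x).toReal)
      ((integrable_const 1).add hiρ) ?_ ?_
    · exact ((Real.continuous_sqrt.measurable.comp hρm).aestronglyMeasurable).restrict
    refine ae_of_all _ fun x => ?_
    rw [Real.norm_eq_abs, abs_of_nonneg (Real.sqrt_nonneg _)]
    have h0 : (0:ℝ) ≤ (μ.rnDeriv volume x).toReal := ENNReal.toReal_nonneg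
    calc Real.sqrt ((μ.rnDeriv volume x).toReal)
        ≤ Real.sqrt ((1 + (μ.rnDeriv volume x).toReal)^2) := by
          apply Real.sqrt_le_sqrt; nlinarith
      _ = 1 + (μ.rnDeriv volume x).toReal := Real.sqrt_sq (by linarith)
  have hiaρ : IntegrableOn (fun x => (p+q*x) * (μ.rnDeriv volume x).toReal)
      (Set.Icc 0 1) volume := by
    refine Integrable.mono' (g := fun x => (p+q) * (μ.rnDeriv volume x).toReal)
      (hiρ.const_mul (p+q)) ?_ ?_
    · exact (((show Measurable (fun x : ℝ => p + q*x) by fun_prop).mul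
        hρm).aestronglyMeasurable).restrict
    apply (ae_restrict_iff' hI).mpr
    refine ae_of_all _ fun x hx => ?_
    rw [Real.norm_eq_abs, abs_of_nonneg (mul_nonneg (hpos x hx).le ENNReal.toReal_nonneg)]
    have h0 := ENNReal.toReal_nonneg (a := μ.rnDeriv volume x)
    apply mul_le_mul_of_nonneg_right _ h0
    nlinarith [hx.2]
  have hiinv : IntegrableOn (fun x : ℝ => (4*(p+q*x))⁻¹) (Set.Icc 0 1) volume := by
    apply ContinuousOn.integrableOn_Icc
    apply ContinuousOn.inv₀ (by fun_prop)
    intro x hx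
    have := hpos x hx
    positivity
  have hd_int : Integrable (fun x => (p+q*x) * (μ.rnDeriv volume x).toReal + (4*(p+q*x))⁻¹
        - Real.sqrt ((μ.rnDeriv volume x).toReal))
      (volume.restrict (Set.Icc (0:ℝ) 1)) := (hiaρ.add hiinv).sub hisqrt
  have hd_zero := (integral_eq_zero_iff_of_nonneg_ae hd_nonneg hd_int).mp hD0
  -- extract the pointwise identification
  have hgae : ∀ᵐ x ∂(volume.restrict (Set.Icc (0:ℝ) 1)),
      (μ.rnDeriv volume x).toReal = (4*(p+q*x)^2)⁻¹ := by
    filter_upwards [hd_zero, ae_restrict_mem hI] with x hdx hxI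
    have hx0 := hpos x hxI
    have := eq_of_deficit_zero (a := p + q*x) (t := (μ.rnDeriv volume x).toReal)
      hx0 ENNReal.toReal_nonneg (by simpa using hdx)
    simpa using this
  constructor
  · refine ⟨fun x => (4*(p+q*x)^2)⁻¹, ?_, hgae⟩
    intro x hx y hy hxy
    have hx0 := hpos x hx
    have hy0 := hpos y hy
    rw [inv_le_inv₀ (by positivity) (by positivity)]
    have h1 : p + q * x ≤ p + q * y := by nlinarith
    nlinarith [h1, hx0, hy0]
  · filter_upwards [hgae, ae_restrict_mem hI] with x hx hxI
    rw [hx]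
    have := hpos x hxI
    positivity
end

section
/- Let m be a positive integer, δ = 1/m, let η ∈ (0, δ²], and let L : [0,1] → [0,1] be a nondecreasing absolutely continuous function. Let L_{δ,η} be the piecewise affine function determined by the points (iδ, η·⌊L(iδ)/η⌋) for i = 0,1,…,m, affine on each interval [iδ,(i+1)δ]. Then |∫₀¹ (L(x) − L_{δ,η}(x)) dx| ≤ 4δ. -/
/-- If `L : [0,1] → [0,1]` is nondecreasing and absolutely continuous, `δ = 1/m`,
`0 < η ≤ δ²`, and `L_{δ,η}` is the piecewise affine function through the points
`(iδ, η⌊L(iδ)/η⌋)`, then `|∫₀¹ (L − L_{δ,η})| ≤ 4δ`. -/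
theorem stmt14 (m : ℕ) (hm : 0 < m) (δ : ℝ) (hδ : δ = 1 / m)
    (η : ℝ) (hη : 0 < η) (hηδ : η ≤ δ ^ 2)
    (L Lδη : ℝ → ℝ)
    (hL01 : ∀ x ∈ Set.Icc (0:ℝ) 1, L x ∈ Set.Icc (0:ℝ) 1)
    (hmono : MonotoneOn L (Set.Icc (0:ℝ) 1))
    (hac : ∃ ρ : ℝ → ℝ, MeasureTheory.IntegrableOn ρ (Set.Icc (0:ℝ) 1) ∧
      ∀ x ∈ Set.Icc (0:ℝ) 1, L x = L 0 + ∫ t in (0:ℝ)..x, ρ t)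
    (hLδη : ∀ i : ℕ, i < m → ∀ x ∈ Set.Icc ((i : ℝ) * δ) (((i : ℝ) + 1) * δ),
      Lδη x = η * (⌊L ((i : ℝ) * δ) / η⌋ : ℝ)
        + (x - (i : ℝ) * δ) / δ
          * (η * (⌊L (((i : ℝ) + 1) * δ) / η⌋ : ℝ) - η * (⌊L ((i : ℝ) * δ) / η⌋ : ℝ))) :
    |∫ x in (0:ℝ)..1, (L x - Lδη x)| ≤ 4 * δ := by
  have hmpos : (0:ℝ) < m := Nat.cast_pos.2 hm
  have hδpos : 0 < δ := by rw [hδ]; positivity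
  have hmδ : (m:ℝ) * δ = 1 := by rw [hδ]; field_simp
  have hδ1 : δ ≤ 1 := by
    have h1 : (1:ℝ) ≤ m := by exact_mod_cast hm
    rw [hδ]
    rw [div_le_one hmpos]
    exact h1
  set a : ℕ → ℝ := fun i => (i:ℝ) * δ with ha
  have hIcc : ∀ i : ℕ, i ≤ m → a i ∈ Set.Icc (0:ℝ) 1 := by
    intro i hi
    refine ⟨by positivity, ?_⟩
    calc (i:ℝ)*δ ≤ (m:ℝ)*δ := by gcongr <;> exact_mod_cast hi
      _ = 1 := hmδ
  have hstep : ∀ i : ℕ, a (i+1) - a i = δ := by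
    intro i; simp only [ha]; push_cast; ring
  have hle : ∀ i : ℕ, a i ≤ a (i+1) := by
    intro i; have := hstep i; linarith
  have hsub : ∀ i : ℕ, i < m → ∀ x ∈ Set.Icc (a i) (a (i+1)), x ∈ Set.Icc (0:ℝ) 1 := by
    intro i hi x hx
    have h1 := (hIcc i hi.le).1
    have h2 := (hIcc (i+1) hi).2
    exact ⟨le_trans h1 hx.1, le_trans hx.2 h2⟩
  -- rewrite hLδη endpoints
  have hLδη' : ∀ i : ℕ, i < m → ∀ x ∈ Set.Icc (a i) (a (i+1)),
      Lδη x = η * (⌊L (a i) / η⌋ : ℝ)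
        + (x - a i) / δ * (η * (⌊L (a (i+1)) / η⌋ : ℝ) - η * (⌊L (a i) / η⌋ : ℝ)) := by
    intro i hi x hx
    have e1 : a (i+1) = ((i:ℝ)+1) * δ := by simp only [ha]; push_cast; ring
    have e2 : a i = (i:ℝ) * δ := rfl
    rw [e2] at hx ⊢; rw [e1] at hx ⊢
    exact hLδη i hi x hx
  -- pointwise bound
  have hpt : ∀ i : ℕ, i < m → ∀ x ∈ Set.Icc (a i) (a (i+1)),
      |L x - Lδη x| ≤ (L (a (i+1)) - L (a i)) + η := by
    intro i hi x hx
    have hxI := hsub i hi x hx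
    have haiI := hIcc i hi.le
    have hai1I := hIcc (i+1) hi
    have hLx1 : L (a i) ≤ L x := hmono haiI hxI hx.1
    have hLx2 : L x ≤ L (a (i+1)) := hmono hxI hai1I hx.2
    have hLmono : L (a i) ≤ L (a (i+1)) := le_trans hLx1 hLx2
    set yi := L (a i)
    set y1 := L (a (i+1))
    have f1 : η * (⌊yi/η⌋ : ℝ) ≤ yi := by
      calc η * (⌊yi/η⌋ : ℝ) ≤ η * (yi/η) :=
            mul_le_mul_of_nonneg_left (Int.floor_le _) hη.le
        _ = yi := by field_simp
    have f2 : yi - η < η * (⌊yi/η⌋ : ℝ) := by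
      have h := mul_lt_mul_of_pos_left (Int.sub_one_lt_floor (yi/η)) hη
      have he : η * (yi/η - 1) = yi - η := by field_simp
      linarith [he ▸ h]
    have f3 : η * (⌊y1/η⌋ : ℝ) ≤ y1 := by
      calc η * (⌊y1/η⌋ : ℝ) ≤ η * (y1/η) :=
            mul_le_mul_of_nonneg_left (Int.floor_le _) hη.le
        _ = y1 := by field_simp
    have fmono : η * (⌊yi/η⌋ : ℝ) ≤ η * (⌊y1/η⌋ : ℝ) := by
      have h : (⌊yi/η⌋ : ℝ) ≤ (⌊y1/η⌋ : ℝ) := by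
        exact_mod_cast Int.floor_le_floor (by gcongr)
      nlinarith
    have hval := hLδη' i hi x hx
    set t := (x - a i) / δ with ht
    have ht0 : 0 ≤ t := by
      apply div_nonneg _ hδpos.le; linarith [hx.1]
    have ht1 : t ≤ 1 := by
      rw [ht, div_le_one hδpos]
      have := hstep i; have := hx.2; linarith
    have hlb : η * (⌊yi/η⌋ : ℝ) ≤ Lδη x := by
      rw [hval]; nlinarith
    have hub : Lδη x ≤ η * (⌊y1/η⌋ : ℝ) := by
      rw [hval]; nlinarith
    rw [abs_le]
    constructor <;> linarith
  -- integrability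
  have hint : ∀ i : ℕ, i < m → IntervalIntegrable (fun x => L x - Lδη x) MeasureTheory.volume (a i) (a (i+1)) := by
    intro i hi
    have hLi : IntervalIntegrable L MeasureTheory.volume (a i) (a (i+1)) := by
      apply MonotoneOn.intervalIntegrable
      apply hmono.mono
      rw [Set.uIcc_of_le (hle i)]
      intro x hx; exact hsub i hi x hx
    have hgi : IntervalIntegrable Lδη MeasureTheory.volume (a i) (a (i+1)) := by
      have hg : IntervalIntegrable (fun x => η * (⌊L (a i) / η⌋ : ℝ)
          + (x - a i) / δ * (η * (⌊L (a (i+1)) / η⌋ : ℝ) - η * (⌊L (a i) / η⌋ : ℝ)))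
          MeasureTheory.volume (a i) (a (i+1)) := by
        apply Continuous.intervalIntegrable
        fun_prop
      rw [intervalIntegrable_iff] at hg ⊢
      apply hg.congr_fun ?_ measurableSet_uIoc
      intro x hx
      rw [Set.uIoc_of_le (hle i)] at hx
      exact (hLδη' i hi x (Set.Ioc_subset_Icc_self hx)).symm
    exact hLi.sub hgi
  have hsum := intervalIntegral.sum_integral_adjacent_intervals hint
  have ha0 : a 0 = 0 := by simp [ha]
  have ham : a m = 1 := hmδ
  rw [ha0, ham] at hsum
  rw [← hsum]
  have hbound : ∀ i ∈ Finset.range m,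
      |∫ x in a i..a (i+1), (L x - Lδη x)| ≤ ((L (a (i+1)) - L (a i)) + η) * δ := by
    intro i hi
    rw [Finset.mem_range] at hi
    have := intervalIntegral.norm_integral_le_of_norm_le_const
      (f := fun x => L x - Lδη x) (a := a i) (b := a (i+1))
      (C := (L (a (i+1)) - L (a i)) + η) ?_
    · rw [Real.norm_eq_abs] at this
      have habs : |a (i+1) - a i| = δ := by rw [hstep i]; exact abs_of_pos hδpos
      rw [habs] at this
      exact this
    · intro x hx
      rw [Set.uIoc_of_le (hle i)] at hx
      rw [Real.norm_eq_abs]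
      exact hpt i hi x (Set.Ioc_subset_Icc_self hx)
  calc |∑ i ∈ Finset.range m, ∫ x in a i..a (i+1), (L x - Lδη x)|
      ≤ ∑ i ∈ Finset.range m, |∫ x in a i..a (i+1), (L x - Lδη x)| :=
        Finset.abs_sum_le_sum_abs _ _
    _ ≤ ∑ i ∈ Finset.range m, ((L (a (i+1)) - L (a i)) + η) * δ :=
        Finset.sum_le_sum hbound
    _ = (L (a m) - L (a 0)) * δ + (m:ℝ) * η * δ := by
        rw [Finset.sum_congr rfl (fun i _ => by ring :
          ∀ i ∈ Finset.range m, ((L (a (i+1)) - L (a i)) + η) * δ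
            = (L (a (i+1)) - L (a i)) * δ + η * δ)]
        rw [Finset.sum_add_distrib, ← Finset.sum_mul, Finset.sum_range_sub (fun i => L (a i))]
        simp [mul_comm, mul_assoc]
    _ ≤ 4 * δ := by
        have h0 := hL01 (a 0) (hIcc 0 (Nat.zero_le m))
        have h1 := hL01 (a m) (hIcc m le_rfl)
        have hmη : (m:ℝ) * η * δ = η * ((m:ℝ) * δ) := by ring
        rw [hmη, hmδ, mul_one]
        have : η ≤ δ := le_trans hηδ (by nlinarith)
        nlinarith [h0.1, h1.2]
end

section
/- Let C > 1 and Δ ≥ 0 be reals, and let f, g : [0,1] → ℝ be integrable functions with 0 ≤ g(x) and 0 ≤ f(x) ≤ C for almost every x ∈ [0,1]. Let S = {x ∈ [0,1] : f(x) ≥ g(x)} and suppose ∫_S (f(x) − g(x)) dx ≥ Δ/4. Then ∫₀¹ [√((f(x)+g(x))/2) − (√(f(x)) + √(g(x)))/2] dx ≥ Δ²/(2000·C²). -/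
open Real

lemma mid_sqrt_ge {a b : ℝ} (ha : 0 ≤ a) (hb : 0 ≤ b) :
    (Real.sqrt a + Real.sqrt b) / 2 ≤ Real.sqrt ((a + b) / 2) := by
  have h : ((Real.sqrt a + Real.sqrt b) / 2) ^ 2 ≤ (a + b) / 2 := by
    nlinarith [Real.sq_sqrt ha, Real.sq_sqrt hb, sq_nonneg (Real.sqrt a - Real.sqrt b)]
  calc (Real.sqrt a + Real.sqrt b) / 2
      = Real.sqrt (((Real.sqrt a + Real.sqrt b) / 2) ^ 2) :=
        (Real.sqrt_sq (by positivity)).symm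
    _ ≤ Real.sqrt ((a + b) / 2) := Real.sqrt_le_sqrt h

lemma concavity_gain {C a b : ℝ} (hC : 1 ≤ C) (hb : 0 ≤ b) (hba : b ≤ a) (haC : a ≤ C) :
    (a - b) ^ 2 / (32 * C ^ 2)
      ≤ Real.sqrt ((a + b) / 2) - (Real.sqrt a + Real.sqrt b) / 2 := by
  have ha : 0 ≤ a := hb.trans hba
  set u := Real.sqrt a with hu
  set v := Real.sqrt b with hv
  set s := Real.sqrt ((a + b) / 2) with hs
  set w := Real.sqrt C with hw
  have hu2 : u ^ 2 = a := Real.sq_sqrt ha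
  have hv2 : v ^ 2 = b := Real.sq_sqrt hb
  have hs2 : s ^ 2 = (a + b) / 2 := Real.sq_sqrt (by linarith)
  have hw2 : w ^ 2 = C := Real.sq_sqrt (by linarith)
  have hu0 : 0 ≤ u := Real.sqrt_nonneg _
  have hv0 : 0 ≤ v := Real.sqrt_nonneg _
  have hs0 : 0 ≤ s := Real.sqrt_nonneg _
  have hw1 : 1 ≤ w := by rw [hw]; exact Real.one_le_sqrt.2 hC
  have huw : u ≤ w := Real.sqrt_le_sqrt haC
  have hvw : v ≤ w := Real.sqrt_le_sqrt (hba.trans haC)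
  have hsw : s ≤ w := Real.sqrt_le_sqrt (by linarith)
  have key : (s - (u + v) / 2) * (s + (u + v) / 2) = (u - v) ^ 2 / 4 := by
    have h : s ^ 2 - ((u + v) / 2) ^ 2 = (u - v) ^ 2 / 4 := by
      rw [hs2, ← hu2, ← hv2]; ring
    nlinarith [h]
  rcases eq_or_lt_of_le (by positivity : (0:ℝ) ≤ s + (u + v) / 2) with hm0 | hm0
  · -- everything zero
    have hu' : u = 0 := by linarith
    have hv' : v = 0 := by linarith
    have hs' : s = 0 := by linarith
    have ha0 : a = 0 := by rw [← hu2, hu']; ring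
    have hb0 : b = 0 := by rw [← hv2, hv']; ring
    rw [ha0, hb0, hu', hv', hs']
    norm_num
  · have hd0 : 0 ≤ s - (u + v) / 2 := by
      by_contra h
      push_neg at h
      have h2 := mul_pos (neg_pos.2 h) hm0
      nlinarith [sq_nonneg (u - v)]
    have h1 : (u - v) ^ 2 ≤ 8 * w * (s - (u + v) / 2) := by
      have hml : s + (u + v) / 2 ≤ 2 * w := by linarith
      have h2 : (s - (u + v) / 2) * (s + (u + v) / 2)
          ≤ (s - (u + v) / 2) * (2 * w) := mul_le_mul_of_nonneg_left hml hd0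
      linarith [key ▸ h2]
    have h2 : (u + v) ^ 2 ≤ 4 * w ^ 2 := by nlinarith [mul_nonneg hu0 hv0]
    have h3 : (a - b) ^ 2 = (u - v) ^ 2 * (u + v) ^ 2 := by
      rw [← hu2, ← hv2]; ring
    rw [div_le_iff₀ (by positivity)]
    have h4 : (u - v) ^ 2 * (u + v) ^ 2 ≤ (8 * w * (s - (u + v) / 2)) * (4 * w ^ 2) :=
      mul_le_mul h1 h2 (sq_nonneg _) (by positivity)
    have h5 : (8 * w * (s - (u + v) / 2)) * (4 * w ^ 2)
        ≤ (s - (u + v) / 2) * (32 * C ^ 2) := by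
      have hw4 : w ^ 4 = C ^ 2 := by rw [← hw2]; ring
      have hle : w ^ 3 ≤ w ^ 4 := by
        calc w ^ 3 = w ^ 3 * 1 := by ring
          _ ≤ w ^ 3 * w := mul_le_mul_of_nonneg_left hw1 (by positivity)
          _ = w ^ 4 := by ring
      calc (8 * w * (s - (u + v) / 2)) * (4 * w ^ 2)
          = 32 * w ^ 3 * (s - (u + v) / 2) := by ring
        _ ≤ 32 * w ^ 4 * (s - (u + v) / 2) := by
            apply mul_le_mul_of_nonneg_right (by linarith) hd0
        _ = (s - (u + v) / 2) * (32 * C ^ 2) := by rw [hw4]; ring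
    linarith [h3 ▸ (h4.trans h5)]

open MeasureTheory Real Set

lemma sqrt_le_one_add_abs (t : ℝ) : Real.sqrt t ≤ 1 + |t| := by
  rcases le_total t 1 with h | h
  · calc Real.sqrt t ≤ Real.sqrt 1 := Real.sqrt_le_sqrt h
      _ = 1 := Real.sqrt_one
      _ ≤ 1 + |t| := by linarith [abs_nonneg t]
  · calc Real.sqrt t ≤ Real.sqrt (t ^ 2) := Real.sqrt_le_sqrt (by nlinarith)
      _ = t := Real.sqrt_sq (by linarith)
      _ ≤ |t| := le_abs_self t
      _ ≤ 1 + |t| := by linarith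

lemma int_sqrt {h : ℝ → ℝ} (hi : MeasureTheory.IntegrableOn h (Set.Icc (0:ℝ) 1)) :
    MeasureTheory.IntegrableOn (fun x => Real.sqrt (h x)) (Set.Icc (0:ℝ) 1) := by
  have hb : MeasureTheory.IntegrableOn (fun x => 1 + |h x|) (Set.Icc (0:ℝ) 1) := by
    apply MeasureTheory.Integrable.add
    · exact MeasureTheory.integrableOn_const (by simp [Real.volume_Icc])
    · exact hi.abs
  apply MeasureTheory.Integrable.mono' hb
  · exact Real.continuous_sqrt.comp_aestronglyMeasurable hi.aestronglyMeasurable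
  · filter_upwards with x
    rw [Real.norm_eq_abs, abs_of_nonneg (Real.sqrt_nonneg _)]
    exact sqrt_le_one_add_abs _


/-- Integrated concavity gain: if `0 ≤ g`, `0 ≤ f ≤ C` a.e. on `[0,1]`, and
`∫_S (f − g) ≥ Δ/4` where `S = {x ∈ [0,1] : f(x) ≥ g(x)}`, then
`∫₀¹ [√((f+g)/2) − (√f + √g)/2] ≥ Δ²/(2000 C²)`. -/
theorem stmt16 (C Δ : ℝ) (hC : 1 < C) (hΔ : 0 ≤ Δ) (f g : ℝ → ℝ)
    (hf : MeasureTheory.IntegrableOn f (Set.Icc (0:ℝ) 1))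
    (hg : MeasureTheory.IntegrableOn g (Set.Icc (0:ℝ) 1))
    (hae : ∀ᵐ x ∂(MeasureTheory.volume.restrict (Set.Icc (0:ℝ) 1)),
      0 ≤ g x ∧ 0 ≤ f x ∧ f x ≤ C)
    (hS : Δ / 4 ≤ ∫ x in {x ∈ Set.Icc (0:ℝ) 1 | g x ≤ f x}, (f x - g x)) :
    Δ ^ 2 / (2000 * C ^ 2)
      ≤ ∫ x in Set.Icc (0:ℝ) 1,
          (Real.sqrt ((f x + g x) / 2) - (Real.sqrt (f x) + Real.sqrt (g x)) / 2) := by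
  classical
  have hI : MeasurableSet (Set.Icc (0:ℝ) 1) := measurableSet_Icc
  set S := {x ∈ Set.Icc (0:ℝ) 1 | g x ≤ f x} with hS_def
  have hSsub : S ⊆ Set.Icc (0:ℝ) 1 := fun x hx => hx.1
  have hC1 : (1:ℝ) ≤ C := hC.le
  have hC0 : (0:ℝ) < C := by linarith
  -- null measurability of S
  obtain ⟨f', hf'sm, hff'⟩ := hf.aestronglyMeasurable
  obtain ⟨g', hg'sm, hgg'⟩ := hg.aestronglyMeasurable
  have hNf : MeasureTheory.volume ({x | ¬ f x = f' x} ∩ Set.Icc (0:ℝ) 1) = 0 := by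
    have h := hff'
    rw [Filter.EventuallyEq, MeasureTheory.ae_iff,
      MeasureTheory.Measure.restrict_apply' hI] at h
    exact h
  have hNg : MeasureTheory.volume ({x | ¬ g x = g' x} ∩ Set.Icc (0:ℝ) 1) = 0 := by
    have h := hgg'
    rw [Filter.EventuallyEq, MeasureTheory.ae_iff,
      MeasureTheory.Measure.restrict_apply' hI] at h
    exact h
  set T := Set.Icc (0:ℝ) 1 ∩ {x | g' x ≤ f' x} with hT_def
  have hT : MeasurableSet T :=
    hI.inter (measurableSet_le hg'sm.measurable hf'sm.measurable)
  have hsub1 : S \ T ⊆ ({x | ¬ f x = f' x} ∩ Set.Icc (0:ℝ) 1)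
      ∪ ({x | ¬ g x = g' x} ∩ Set.Icc (0:ℝ) 1) := by
    rintro x ⟨⟨hxI, hxfg⟩, hxT⟩
    by_cases h1 : f x = f' x
    · by_cases h2 : g x = g' x
      · exact absurd ⟨hxI, show g' x ≤ f' x by rw [← h1, ← h2]; exact hxfg⟩ hxT
      · exact Or.inr ⟨h2, hxI⟩
    · exact Or.inl ⟨h1, hxI⟩
  have hsub2 : T \ S ⊆ ({x | ¬ f x = f' x} ∩ Set.Icc (0:ℝ) 1)
      ∪ ({x | ¬ g x = g' x} ∩ Set.Icc (0:ℝ) 1) := by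
    rintro x ⟨⟨hxI, hxfg⟩, hxS⟩
    by_cases h1 : f x = f' x
    · by_cases h2 : g x = g' x
      · exact absurd ⟨hxI, show g x ≤ f x by rw [h1, h2]; exact hxfg⟩ hxS
      · exact Or.inr ⟨h2, hxI⟩
    · exact Or.inl ⟨h1, hxI⟩
  have hSeq : S =ᵐ[MeasureTheory.volume] T := by
    rw [MeasureTheory.ae_eq_set]
    exact ⟨MeasureTheory.measure_mono_null hsub1
        (MeasureTheory.measure_union_null hNf hNg),
      MeasureTheory.measure_mono_null hsub2
        (MeasureTheory.measure_union_null hNf hNg)⟩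
  have hSnm : MeasureTheory.NullMeasurableSet S MeasureTheory.volume :=
    hT.nullMeasurableSet.congr hSeq.symm
  -- a.e. facts on S
  have haeS : ∀ᵐ x ∂(MeasureTheory.volume.restrict S),
      0 ≤ g x ∧ g x ≤ f x ∧ f x ≤ C := by
    have h1 := MeasureTheory.ae_restrict_of_ae_restrict_of_subset hSsub hae
    have h2 := MeasureTheory.ae_restrict_mem₀ hSnm
    filter_upwards [h1, h2] with x hx hxS
    exact ⟨hx.1, hxS.2, hx.2.2⟩
  -- integrability
  have hfg : MeasureTheory.IntegrableOn (fun x => f x - g x) (Set.Icc (0:ℝ) 1) :=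
    hf.sub hg
  have hfgS : MeasureTheory.IntegrableOn (fun x => f x - g x) S :=
    hfg.mono_set hSsub
  have hsqS : MeasureTheory.IntegrableOn (fun x => (f x - g x) ^ 2) S := by
    apply MeasureTheory.Integrable.mono' (hfgS.const_mul C)
    · have hA := hfgS.aestronglyMeasurable
      have he : (fun x => (f x - g x) ^ 2) = fun x => (f x - g x) * (f x - g x) := by
        funext x; ring
      rw [he]
      exact hA.mul hA
    · filter_upwards [haeS] with x hx
      rw [Real.norm_eq_abs, abs_of_nonneg (sq_nonneg _)]
      nlinarith [hx.1, hx.2.1, hx.2.2]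
  -- measure of S
  have hmS : MeasureTheory.volume S ≤ 1 := by
    calc MeasureTheory.volume S ≤ MeasureTheory.volume (Set.Icc (0:ℝ) 1) :=
        MeasureTheory.measure_mono hSsub
      _ = 1 := by simp [Real.volume_Icc]
  have hmS' : (MeasureTheory.volume S).toReal ≤ 1 := by
    have h := ENNReal.toReal_mono (by norm_num) hmS
    simpa using h
  have hmSfin : MeasureTheory.volume S < ⊤ :=
    lt_of_le_of_lt hmS (by norm_num)
  -- Cauchy–Schwarz via completing the square
  have hCS : (Δ / 4) ^ 2 ≤ ∫ x in S, (f x - g x) ^ 2 := by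
    have h0 : 0 ≤ ∫ x in S, (f x - g x - Δ / 4) ^ 2 :=
      MeasureTheory.integral_nonneg (fun x => sq_nonneg _)
    have hconst : MeasureTheory.Integrable (fun _ : ℝ => (Δ / 4) ^ 2)
        (MeasureTheory.volume.restrict S) :=
      MeasureTheory.integrableOn_const hmSfin.ne
    have hexp : ∫ x in S, (f x - g x - Δ / 4) ^ 2
        = (∫ x in S, (f x - g x) ^ 2) - (Δ / 2) * (∫ x in S, (f x - g x))
          + (MeasureTheory.volume S).toReal * (Δ / 4) ^ 2 := by
      have e1 : (fun x => (f x - g x - Δ / 4) ^ 2)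
          = fun x => ((f x - g x) ^ 2 - (Δ / 2) * (f x - g x) + (Δ / 4) ^ 2) := by
        funext x; ring
      have hint2 : MeasureTheory.Integrable (fun x => (Δ / 2) * (f x - g x))
          (MeasureTheory.volume.restrict S) := hfgS.const_mul (Δ / 2)
      have hint1 : MeasureTheory.Integrable
          (fun x => (f x - g x) ^ 2 - (Δ / 2) * (f x - g x))
          (MeasureTheory.volume.restrict S) := hsqS.sub hint2
      rw [e1, MeasureTheory.integral_add hint1 hconst,
        MeasureTheory.integral_sub hsqS hint2,
        MeasureTheory.integral_const_mul, MeasureTheory.setIntegral_const,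
        smul_eq_mul, MeasureTheory.measureReal_def]
    have hterm : (Δ / 2) * (Δ / 4) ≤ (Δ / 2) * (∫ x in S, (f x - g x)) :=
      mul_le_mul_of_nonneg_left hS (by linarith)
    have hm2 : (MeasureTheory.volume S).toReal * (Δ / 4) ^ 2 ≤ (Δ / 4) ^ 2 := by
      nlinarith [ENNReal.toReal_nonneg (a := MeasureTheory.volume S), sq_nonneg (Δ / 4)]
    rw [hexp] at h0
    nlinarith [h0, hterm, hm2]
  -- the gain function
  have hGI : MeasureTheory.IntegrableOn
      (fun x => Real.sqrt ((f x + g x) / 2)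
        - (Real.sqrt (f x) + Real.sqrt (g x)) / 2) (Set.Icc (0:ℝ) 1) := by
    have h1 := int_sqrt ((hf.add hg).div_const 2)
    have h2 := int_sqrt hf
    have h3 := int_sqrt hg
    exact h1.sub ((h2.add h3).div_const 2)
  have hGS : MeasureTheory.IntegrableOn
      (fun x => Real.sqrt ((f x + g x) / 2)
        - (Real.sqrt (f x) + Real.sqrt (g x)) / 2) S := hGI.mono_set hSsub
  have hG0 : 0 ≤ᵐ[MeasureTheory.volume.restrict (Set.Icc (0:ℝ) 1)]
      (fun x => Real.sqrt ((f x + g x) / 2)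
        - (Real.sqrt (f x) + Real.sqrt (g x)) / 2) := by
    filter_upwards [hae] with x hx
    have h := mid_sqrt_ge hx.2.1 hx.1
    simp only [Pi.zero_apply]
    linarith
  have hBA : (∫ x in S, (Real.sqrt ((f x + g x) / 2)
        - (Real.sqrt (f x) + Real.sqrt (g x)) / 2))
      ≤ ∫ x in Set.Icc (0:ℝ) 1, (Real.sqrt ((f x + g x) / 2)
        - (Real.sqrt (f x) + Real.sqrt (g x)) / 2) :=
    MeasureTheory.setIntegral_mono_set hGI hG0
      (HasSubset.Subset.eventuallyLE hSsub)
  have hlow : ∫ x in S, (f x - g x) ^ 2 / (32 * C ^ 2)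
      ≤ ∫ x in S, (Real.sqrt ((f x + g x) / 2)
        - (Real.sqrt (f x) + Real.sqrt (g x)) / 2) := by
    apply MeasureTheory.integral_mono_ae (hsqS.div_const _) hGS
    filter_upwards [haeS] with x hx
    exact concavity_gain hC1 hx.1 hx.2.1 hx.2.2
  have hdiv : ∫ x in S, (f x - g x) ^ 2 / (32 * C ^ 2)
      = (∫ x in S, (f x - g x) ^ 2) / (32 * C ^ 2) :=
    MeasureTheory.integral_div _ _
  calc Δ ^ 2 / (2000 * C ^ 2) ≤ (Δ / 4) ^ 2 / (32 * C ^ 2) := by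
        rw [div_le_div_iff₀ (by positivity) (by positivity)]
        nlinarith [sq_nonneg Δ, sq_nonneg C, mul_nonneg (sq_nonneg Δ) (sq_nonneg C)]
    _ ≤ (∫ x in S, (f x - g x) ^ 2) / (32 * C ^ 2) := by gcongr
    _ = ∫ x in S, (f x - g x) ^ 2 / (32 * C ^ 2) := hdiv.symm
    _ ≤ _ := hlow
    _ ≤ _ := hBA
end

section
/- Fix reals C > 1, κ > 1 and ε > 0. Then for all sufficiently large n the following holds. Let u₀ ⪯ u₁ ⪯ ⋯ ⪯ u_k be points of ℝ² (coordinatewise partial order, consecutive points distinct) forming a (C,κ)-regular sequence, i.e.: (i) the slopes of the consecutive segments [u_i,u_{i+1}] are nonincreasing in i (the polygonal chain through u₀,…,u_k is concave); (ii) every segment [u_i,u_{i+1}] has slope in the interval (1/κ, κ); (iii) the Euclidean distance |u_k − u₀| lies in (C⁻¹·n^{3/4−ε/2}, C·n^{3/4−ε/2}); (iv) |u_i − u_{i+1}| ≤ n^{3/4−ε} for every i; (v) θ₁ − θ₂ ≤ 100·C²·n^{−1/4−ε/2}, where θ₁ and θ₂ are the angles that the segments [u₀,u₁] and [u_{k−1},u_k]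 respectively make with the positive x-axis. Let R be the parallelogram R = {u₀ + t·(u_k − u₀) + (0,s) : t ∈ [0,1], s ∈ [0, n^{1/2−ε/2}]}, whose bottom side is the segment [u₀,u_k] and whose vertical sides have length n^{1/2−ε/2}. Then there exists a point u* ∈ R such that the triangle T with vertices u₀, u_k, u* is isosceles with |u* − u₀| = |u* − u_k|, T is contained in R, and the polygonal chain through u₀,…,u_k is contained in T (so the two sides [u₀,u*] and [u*,u_k] lie weakly above the chain). -/
open Real Finset

/-- The slope of the segment from `u i` to `u (i+1)` in the Euclidean plane. -/
noncomputable def segSlope (u : ℕ → EuclideanSpace ℝ (Fin 2)) (i : ℕ) : ℝ :=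
  (u (i + 1) 1 - u i 1) / (u (i + 1) 0 - u i 0)

/-- The parallelogram whose bottom side is the segment from `u0` to `uk` and whose
vertical sides have length `h`. -/
def para (u0 uk : EuclideanSpace ℝ (Fin 2)) (h : ℝ) : Set (EuclideanSpace ℝ (Fin 2)) :=
  {p | ∃ t ∈ Set.Icc (0:ℝ) 1, ∃ s ∈ Set.Icc (0:ℝ) h,
    p = u0 + t • (uk - u0) + s • (EuclideanSpace.single (1 : Fin 2) (1 : ℝ))}

lemma tan_le_two_mul' {x : ℝ} (h0 : 0 ≤ x) (h1 : x ≤ 1) : Real.tan x ≤ 2 * x := by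
  have hcos : 1 - x^2/2 ≤ Real.cos x := Real.one_sub_sq_div_two_le_cos
  have hcos2 : (1:ℝ)/2 ≤ Real.cos x := by nlinarith
  have hsin : Real.sin x ≤ x := Real.sin_le h0
  rw [Real.tan_eq_sin_div_cos, div_le_iff₀ (by linarith)]
  nlinarith

lemma tan_arctan_sub' {a b : ℝ} (h : 0 ≤ a * b) :
    Real.tan (Real.arctan a - Real.arctan b) = (a - b) / (1 + a * b) := by
  have ha : (0:ℝ) < Real.sqrt (1 + a^2) := Real.sqrt_pos.2 (by positivity)
  have hb : (0:ℝ) < Real.sqrt (1 + b^2) := Real.sqrt_pos.2 (by positivity)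
  have hab : (0:ℝ) < 1 + a*b := by linarith
  rw [Real.tan_eq_sin_div_cos, Real.sin_sub, Real.cos_sub, Real.sin_arctan,
    Real.cos_arctan, Real.sin_arctan, Real.cos_arctan]
  field_simp

lemma key_ineq' {a b δ : ℝ} (hb : 0 ≤ b) (hab : b ≤ a)
    (h : Real.arctan a - Real.arctan b ≤ δ) (hδ : δ ≤ 1) :
    a - b ≤ 2 * δ * (1 + a * b) := by
  have h0 : 0 ≤ Real.arctan a - Real.arctan b := by
    have := Real.arctan_strictMono.monotone hab; linarith
  have hd0 : 0 ≤ δ := le_trans h0 h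
  have hpi : (1:ℝ) < π / 2 := by
    have := Real.pi_gt_three; linarith
  have hlt : Real.arctan a - Real.arctan b < π/2 := by
    have h1 := Real.arctan_lt_pi_div_two a
    have h2 : 0 ≤ Real.arctan b := by
      simpa using Real.arctan_strictMono.monotone hb
    linarith
  have hmono : Real.tan (Real.arctan a - Real.arctan b) ≤ Real.tan δ := by
    apply Real.strictMonoOn_tan.monotoneOn ⟨by linarith [Real.pi_pos], hlt⟩
      ⟨by linarith [Real.pi_pos], by linarith⟩ h
  have habnn : 0 ≤ a * b := mul_nonneg (le_trans hb hab) hb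
  rw [tan_arctan_sub' habnn] at hmono
  have htan := tan_le_two_mul' hd0 hδ
  have h1ab : (0:ℝ) < 1 + a*b := by linarith
  rw [div_le_iff₀ h1ab] at hmono
  nlinarith

lemma para_convex (u0 uk : EuclideanSpace ℝ (Fin 2)) (h : ℝ) :
    Convex ℝ (para u0 uk h) := by
  rintro p ⟨t1, ht1, s1, hs1, rfl⟩ q ⟨t2, ht2, s2, hs2, rfl⟩ a b ha hb hab
  refine ⟨a*t1 + b*t2, ⟨add_nonneg (mul_nonneg ha ht1.1) (mul_nonneg hb ht2.1), ?_⟩,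
    a*s1 + b*s2, ⟨add_nonneg (mul_nonneg ha hs1.1) (mul_nonneg hb hs2.1), ?_⟩, ?_⟩
  · calc a*t1 + b*t2 ≤ a*1 + b*1 := by
          gcongr; exact ht1.2; exact ht2.2
      _ = 1 := by linarith
  · calc a*s1 + b*s2 ≤ a*h + b*h := by
          gcongr; exact hs1.2; exact hs2.2
      _ = h := by rw [← add_mul, hab, one_mul]
  · have hb' : b = 1 - a := by linarith
    subst hb'
    module

lemma step_mono' {f : ℕ → ℝ} {k : ℕ} (h : ∀ j < k, f j ≤ f (j+1)) :
    ∀ j ≤ k, ∀ i ≤ j, f i ≤ f j := by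
  intro j
  induction j with
  | zero =>
    intro _ i hi
    have : i = 0 := Nat.le_zero.1 hi
    simp [this]
  | succ p ih =>
    intro hpk i hip
    rcases Nat.lt_or_ge i (p+1) with hlt | hge
    · exact le_trans (ih (by omega) i (by omega)) (h p (by omega))
    · have : i = p + 1 := by omega
      simp [this]

set_option maxHeartbeats 1600000 in
/-- For fixed `C, κ > 1` and `ε > 0`, for all sufficiently large `n`: given a
`(C,κ)`-regular sequence `u₀ ⪯ u₁ ⪯ ⋯ ⪯ u_k` (concave chain, slopes in `(1/κ, κ)`,
`|u_k − u₀| ∈ (C⁻¹ n^{3/4−ε/2}, C n^{3/4−ε/2})`, steps of length at most `n^{3/4−ε}`,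
and total angle change at most `100 C² n^{−1/4−ε/2}`), there is a point `u*` in the
parallelogram `R` over the segment `[u₀, u_k]` of vertical height `n^{1/2−ε/2}` such
that the triangle with vertices `u₀, u_k, u*` is isosceles (`|u* − u₀| = |u* − u_k|`),
is contained in `R`, and contains the polygonal chain through `u₀, …, u_k`. -/
theorem stmt19 (C κ ε : ℝ) (hC : 1 < C) (hκ : 1 < κ) (hε : 0 < ε) :
    ∃ N : ℕ, ∀ n : ℕ, N ≤ n →
    ∀ (k : ℕ) (u : ℕ → EuclideanSpace ℝ (Fin 2)), 1 ≤ k →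
    -- the points are coordinatewise ordered, with consecutive points distinct
    (∀ i < k, u i 0 < u (i + 1) 0 ∧ u i 1 ≤ u (i + 1) 1) →
    -- (i) concavity of the polygonal chain: slopes are nonincreasing
    (∀ i, i + 1 < k → segSlope u (i + 1) ≤ segSlope u i) →
    -- (ii) every segment has segSlope in (1/κ, κ)
    (∀ i < k, segSlope u i ∈ Set.Ioo (1 / κ) κ) →
    -- (iii) |u_k − u₀| ∈ (C⁻¹ n^{3/4−ε/2}, C n^{3/4−ε/2})
    dist (u k) (u 0) ∈
      Set.Ioo (C⁻¹ * (n : ℝ) ^ ((3 : ℝ) / 4 - ε / 2)) (C * (n : ℝ) ^ ((3 : ℝ) / 4 - ε / 2)) →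
    -- (iv) |u_i − u_{i+1}| ≤ n^{3/4−ε}
    (∀ i < k, dist (u i) (u (i + 1)) ≤ (n : ℝ) ^ ((3 : ℝ) / 4 - ε)) →
    -- (v) θ₁ − θ₂ ≤ 100 C² n^{−1/4−ε/2}
    Real.arctan (segSlope u 0) - Real.arctan (segSlope u (k - 1))
      ≤ 100 * C ^ 2 * (n : ℝ) ^ (-(1 : ℝ) / 4 - ε / 2) →
    ∃ ustar ∈ para (u 0) (u k) ((n : ℝ) ^ ((1 : ℝ) / 2 - ε / 2)),
      dist ustar (u 0) = dist ustar (u k) ∧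
      convexHull ℝ {u 0, u k, ustar} ⊆ para (u 0) (u k) ((n : ℝ) ^ ((1 : ℝ) / 2 - ε / 2)) ∧
      (⋃ i ∈ Finset.range k, segment ℝ (u i) (u (i + 1)))
        ⊆ convexHull ℝ {u 0, u k, ustar} := by
  have hεp : (0:ℝ) < 1/4 + ε/2 := by linarith
  have hε2 : (0:ℝ) < ε/2 := by linarith
  have h1 : Filter.Tendsto (fun n : ℕ => (n:ℝ) ^ ((1:ℝ)/4 + ε/2)) Filter.atTop Filter.atTop :=
    (tendsto_rpow_atTop hεp).comp tendsto_natCast_atTop_atTop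
  have h2 : Filter.Tendsto (fun n : ℕ => (n:ℝ) ^ (ε/2)) Filter.atTop Filter.atTop :=
    (tendsto_rpow_atTop hε2).comp tendsto_natCast_atTop_atTop
  have hev := ((h1.eventually_ge_atTop (100*C^2*(2*κ+1))).and
    ((h2.eventually_ge_atTop (100*C^3*(1+κ^2))).and (Filter.eventually_ge_atTop 1)))
  obtain ⟨N, hN⟩ := Filter.eventually_atTop.1 hev
  refine ⟨N, ?_⟩
  intro n hn k u hk hord hconc hslope hdist hstep hangle
  obtain ⟨hP1, hP2, hn1⟩ := hN n hn
  have hn1' : (1:ℝ) ≤ (n:ℝ) := by exact_mod_cast hn1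
  have npos : (0:ℝ) < (n:ℝ) := by linarith
  have hCpos : (0:ℝ) < C := by linarith
  have hκpos : (0:ℝ) < κ := by linarith
  obtain ⟨δ, hδdef⟩ : ∃ x : ℝ, x = 100 * C ^ 2 * (n:ℝ) ^ (-(1:ℝ) / 4 - ε / 2) := ⟨_, rfl⟩
  rw [← hδdef] at hangle
  have hPpos : (0:ℝ) < (n:ℝ) ^ ((1:ℝ)/4 + ε/2) := Real.rpow_pos_of_pos npos _
  have hPval : (n:ℝ) ^ (-(1:ℝ) / 4 - ε / 2) = ((n:ℝ) ^ ((1:ℝ)/4 + ε/2))⁻¹ := by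
    rw [← Real.rpow_neg npos.le]
    congr 1
    ring
  have hδpos : 0 < δ := by rw [hδdef]; positivity
  have hδκ : δ * (2*κ+1) ≤ 1 := by
    rw [hδdef, hPval]
    have he : 100 * C ^ 2 * ((n:ℝ) ^ ((1:ℝ)/4 + ε/2))⁻¹ * (2*κ+1)
        = (100*C^2*(2*κ+1)) / ((n:ℝ) ^ ((1:ℝ)/4 + ε/2)) := by ring
    rw [he, div_le_one hPpos]
    exact hP1
  have hδ1 : δ ≤ 1 := by
    have h := mul_nonneg hδpos.le (by linarith : (0:ℝ) ≤ 2*κ)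
    linarith
  obtain ⟨τ, hτdef⟩ : ∃ x : ℝ, x = 2 * δ := ⟨_, rfl⟩
  have hτpos : 0 < τ := by rw [hτdef]; linarith
  have hτκ : τ * κ ≤ 1 := by
    rw [hτdef]
    linarith [hδκ, hδpos]
  -- slopes
  have hxlt : ∀ i < k, u i 0 < u (i + 1) 0 := fun i hi => (hord i hi).1
  have hdiff : ∀ i < k, u (i+1) 1 - u i 1 = segSlope u i * (u (i+1) 0 - u i 0) := by
    intro i hi
    have hne : u (i+1) 0 - u i 0 ≠ 0 := ne_of_gt (sub_pos.2 (hxlt i hi))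
    rw [segSlope, div_mul_cancel₀ _ hne]
  have smono : ∀ j, j < k → ∀ i, i ≤ j → segSlope u j ≤ segSlope u i := by
    intro j
    induction j with
    | zero =>
      intro _ i hi
      have : i = 0 := Nat.le_zero.1 hi
      simp [this]
    | succ p ih =>
      intro hpk i hip
      rcases Nat.eq_or_lt_of_le hip with heq | hlt
      · rw [heq]
      · have h1 := hconc p hpk
        have h2 := ih (by omega) i (by omega)
        linarith
  have hslb : ∀ i < k, 0 < segSlope u i := by
    intro i hi
    have h1 := (hslope i hi).1
    have h1κ : 0 < 1/κ := by positivity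
    linarith
  have hsub : ∀ i < k, segSlope u i < κ := fun i hi => (hslope i hi).2
  have hk1 : k - 1 < k := by omega
  obtain ⟨dx, hdxdef⟩ : ∃ x : ℝ, x = u k 0 - u 0 0 := ⟨_, rfl⟩
  obtain ⟨dy, hdydef⟩ : ∃ x : ℝ, x = u k 1 - u 0 1 := ⟨_, rfl⟩
  have hdx_sum : dx = ∑ i ∈ range k, (u (i+1) 0 - u i 0) := by
    rw [hdxdef, Finset.sum_range_sub (fun i => u i 0)]
  have hdy_sum : dy = ∑ i ∈ range k, (u (i+1) 1 - u i 1) := by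
    rw [hdydef, Finset.sum_range_sub (fun i => u i 1)]
  have hdxpos : 0 < dx := by
    rw [hdx_sum]
    apply Finset.sum_pos
    · intro i hi
      exact sub_pos.2 (hxlt i (mem_range.1 hi))
    · exact nonempty_range_iff.2 (by omega)
  have hdy_le : dy ≤ segSlope u 0 * dx := by
    rw [hdy_sum, hdx_sum, Finset.mul_sum]
    apply Finset.sum_le_sum
    intro i hi
    have hik := mem_range.1 hi
    rw [hdiff i hik]
    exact mul_le_mul_of_nonneg_right (smono i hik 0 (Nat.zero_le i))
      (le_of_lt (sub_pos.2 (hxlt i hik)))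
  have hdy_ge : segSlope u (k-1) * dx ≤ dy := by
    rw [hdy_sum, hdx_sum, Finset.mul_sum]
    apply Finset.sum_le_sum
    intro i hi
    have hik := mem_range.1 hi
    rw [hdiff i hik]
    exact mul_le_mul_of_nonneg_right (smono (k-1) hk1 i (by omega))
      (le_of_lt (sub_pos.2 (hxlt i hik)))
  have hdypos : 0 < dy :=
    lt_of_lt_of_le (mul_pos (hslb _ hk1) hdxpos) hdy_ge
  have hdyκ : dy ≤ κ * dx :=
    le_trans hdy_le (mul_le_mul_of_nonneg_right (hsub 0 (by omega)).le hdxpos.le)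
  -- chord slope
  have hσ1 : dy / dx ≤ segSlope u 0 := (div_le_iff₀ hdxpos).2 (by linarith [hdy_le])
  have hσ2 : segSlope u (k-1) ≤ dy / dx := (le_div_iff₀ hdxpos).2 hdy_ge
  have hσpos : 0 ≤ dy / dx := div_nonneg hdypos.le hdxpos.le
  have hang1 : Real.arctan (segSlope u 0) - Real.arctan (dy/dx) ≤ δ := by
    have := Real.arctan_strictMono.monotone hσ2
    linarith [hangle]
  have hang2 : Real.arctan (dy/dx) - Real.arctan (segSlope u (k-1)) ≤ δ := by
    have := Real.arctan_strictMono.monotone hσ1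
    linarith [hangle]
  have K1' := key_ineq' hσpos hσ1 hang1 hδ1
  have K2' := key_ineq' (hslb _ hk1).le hσ2 hang2 hδ1
  have hdivdx : dy / dx * dx = dy := div_mul_cancel₀ _ (ne_of_gt hdxpos)
  have K1 : segSlope u 0 * dx - dy ≤ τ * (dx + segSlope u 0 * dy) := by
    rw [hτdef, ← sub_nonneg]
    have expand : 2*δ*(dx + segSlope u 0*dy) - (segSlope u 0*dx - dy)
        = (2*δ*(1 + segSlope u 0*(dy/dx)) - (segSlope u 0 - dy/dx))*dx := by
      field_simp
      try ring
    rw [expand]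
    exact mul_nonneg (by linarith [K1']) hdxpos.le
  have K2 : dy - segSlope u (k-1) * dx ≤ τ * (dx + segSlope u (k-1) * dy) := by
    rw [hτdef, ← sub_nonneg]
    have expand : 2*δ*(dx + segSlope u (k-1)*dy) - (dy - segSlope u (k-1)*dx)
        = (2*δ*(1 + dy/dx * segSlope u (k-1)) - (dy/dx - segSlope u (k-1)))*dx := by
      field_simp
      try ring
    rw [expand]
    exact mul_nonneg (by linarith [K2']) hdxpos.le
  obtain ⟨vx, hvxdef⟩ : ∃ x : ℝ, x = (dx - τ*dy)/2 := ⟨_, rfl⟩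
  obtain ⟨vy, hvydef⟩ : ∃ x : ℝ, x = (dy + τ*dx)/2 := ⟨_, rfl⟩
  have hτdy : τ * dy ≤ dx := by
    have ha := mul_le_mul_of_nonneg_left hdyκ hτpos.le
    have hb := mul_le_mul_of_nonneg_right hτκ hdxpos.le
    have hc : τ * (κ * dx) = τ * κ * dx := by ring
    linarith
  have hvx0 : 0 ≤ vx := by
    rw [hvxdef]
    linarith
  have hDpos : 0 < dx*vy - dy*vx := by
    have he : dx*vy - dy*vx = τ*(dx^2+dy^2)/2 := by rw [hvxdef, hvydef]; ring
    rw [he]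
    positivity
  have hside1 : ∀ i < k, 0 ≤ vy - segSlope u i * vx := by
    intro i hi
    have h0 : segSlope u i ≤ segSlope u 0 := smono i hi 0 (Nat.zero_le i)
    have hbase : 0 ≤ vy - segSlope u 0 * vx := by
      rw [hvxdef, hvydef]
      linarith [K1]
    have hp := mul_le_mul_of_nonneg_right h0 hvx0
    linarith
  have hside2 : ∀ i < k, 0 ≤ (segSlope u i * dx - dy) + τ * (dx + segSlope u i * dy) := by
    intro i hi
    have h0 : segSlope u (k-1) ≤ segSlope u i := smono (k-1) hk1 i (by omega)
    have hp := mul_nonneg (sub_nonneg.2 h0)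
      (add_nonneg hdxpos.le (mul_nonneg hτpos.le hdypos.le))
    linarith [hp, K2]
  -- vertex functionals
  obtain ⟨F, hFdef⟩ : ∃ f : ℕ → ℝ, f = fun i => dx * (u i 1 - u 0 1) - dy * (u i 0 - u 0 0) :=
    ⟨_, rfl⟩
  obtain ⟨G, hGdef⟩ : ∃ f : ℕ → ℝ, f = fun i => (u i 0 - u 0 0) * vy - (u i 1 - u 0 1) * vx :=
    ⟨_, rfl⟩
  have hF0 : F 0 = 0 := by simp [hFdef]
  have hG0 : G 0 = 0 := by simp [hGdef]
  have hFk : F k = 0 := by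
    simp only [hFdef]
    rw [← hdxdef, ← hdydef]
    ring
  have hGk : G k = dx * vy - dy * vx := by
    simp only [hGdef]
    rw [← hdxdef, ← hdydef]
  have hFstep : ∀ j < k, F (j+1) - F j = (u (j+1) 0 - u j 0) * (dx * segSlope u j - dy) := by
    intro j hj
    simp only [hFdef]
    linear_combination dx * (hdiff j hj)
  have hGstep : ∀ j < k, G (j+1) - G j = (u (j+1) 0 - u j 0) * (vy - segSlope u j * vx) := by
    intro j hj
    simp only [hGdef]
    linear_combination (-vx) * (hdiff j hj)
  have hGnn : ∀ i ≤ k, 0 ≤ G i := by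
    intro i hik
    have hmono : ∀ j < k, G j ≤ G (j+1) := by
      intro j hj
      have e := hGstep j hj
      have hp := mul_nonneg (sub_pos.2 (hxlt j hj)).le (hside1 j hj)
      linarith
    have := step_mono' hmono i hik 0 (Nat.zero_le i)
    linarith [hG0]
  have hHle : ∀ i ≤ k, G i + F i ≤ G k + F k := by
    intro i hik
    have hmono : ∀ j < k, G j + F j ≤ G (j+1) + F (j+1) := by
      intro j hj
      have e : (G (j+1) + F (j+1)) - (G j + F j)
          = (u (j+1) 0 - u j 0) *
            (((segSlope u j * dx - dy) + τ*(dx + segSlope u j * dy))/2) := by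
        simp only [hFdef, hGdef, hvxdef, hvydef]
        linear_combination ((dx + τ*dy)/2) * (hdiff j hj)
      have hp := mul_nonneg (sub_pos.2 (hxlt j hj)).le
        (by linarith [hside2 j hj] :
          0 ≤ ((segSlope u j * dx - dy) + τ*(dx + segSlope u j * dy))/2)
      linarith
    exact step_mono' hmono k le_rfl i hik
  have hFnn : ∀ i ≤ k, 0 ≤ F i := by
    intro i hik
    by_contra hneg
    push_neg at hneg
    obtain ⟨c, hcdef⟩ : ∃ f : ℕ → ℝ, f = fun j => (u (j+1) 0 - u j 0) * (dx * segSlope u j - dy) :=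
      ⟨_, rfl⟩
    have hFeq : ∀ m, m ≤ k → F m = ∑ j ∈ range m, c j := by
      intro m hm
      calc F m = ∑ j ∈ range m, (F (j+1) - F j) := by
            rw [Finset.sum_range_sub F m, hF0, sub_zero]
        _ = ∑ j ∈ range m, c j := by
            apply Finset.sum_congr rfl
            intro j hj
            have hjk : j < k := lt_of_lt_of_le (mem_range.1 hj) hm
            rw [hcdef]
            exact hFstep j hjk
    have hi : F i = ∑ j ∈ range i, c j := hFeq i hik
    have hlt : ∑ j ∈ range i, c j < ∑ j ∈ range i, (0:ℝ) := by
      rw [Finset.sum_const_zero, ← hi]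
      exact hneg
    obtain ⟨j, hjmem, hcj⟩ := Finset.exists_lt_of_sum_lt hlt
    have hji : j < i := mem_range.1 hjmem
    have hjk : j < k := by omega
    have hsneg : dx * segSlope u j - dy < 0 := by
      by_contra hge
      push_neg at hge
      have hnn : 0 ≤ c j := by
        rw [hcdef]
        exact mul_nonneg (sub_pos.2 (hxlt j hjk)).le hge
      linarith
    have hFk' : F k = F i + ∑ j' ∈ Ico i k, c j' := by
      rw [hFeq k le_rfl, ← Finset.sum_range_add_sum_Ico c hik, hi]
    have hsum_nonpos : ∑ j' ∈ Ico i k, c j' ≤ 0 := by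
      apply Finset.sum_nonpos
      intro j' hj'
      obtain ⟨hij', hj'k⟩ := mem_Ico.1 hj'
      have hsle : segSlope u j' ≤ segSlope u j := smono j' hj'k j (by omega)
      have hneg' : dx * segSlope u j' - dy < 0 := by
        have hmul := mul_le_mul_of_nonneg_left hsle hdxpos.le
        linarith
      rw [hcdef]
      exact mul_nonpos_of_nonneg_of_nonpos (sub_pos.2 (hxlt j' hj'k)).le hneg'.le
    rw [hFk] at hFk'
    linarith
  -- the apex point
  obtain ⟨S, hSdef⟩ : ∃ x : EuclideanSpace ℝ (Fin 2),
      x = (WithLp.equiv 2 (Fin 2 → ℝ)).symm ![u 0 0 + vx, u 0 1 + vy] := ⟨_, rfl⟩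
  have hS0 : S 0 = u 0 0 + vx := by
    rw [hSdef]
    simp
  have hS1 : S 1 = u 0 1 + vy := by
    rw [hSdef]
    simp
  obtain ⟨hgt, hhdef⟩ : ∃ x : ℝ, x = (n:ℝ) ^ ((1:ℝ)/2 - ε/2) := ⟨_, rfl⟩
  rw [← hhdef]
  have hhgt0 : 0 ≤ hgt := by rw [hhdef]; positivity
  -- distance facts
  have hdistval : dist (u k) (u 0) = Real.sqrt (dx^2 + dy^2) := by
    rw [EuclideanSpace.dist_eq]
    congr 1
    rw [Fin.sum_univ_two, Real.dist_eq, Real.dist_eq, sq_abs, sq_abs, ← hdxdef, ← hdydef]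
  have hdxC : dx ≤ C * (n:ℝ) ^ ((3:ℝ)/4 - ε/2) := by
    have h1 : dx ≤ Real.sqrt (dx^2 + dy^2) := by
      have h2 := Real.sqrt_le_sqrt (le_add_of_nonneg_right (sq_nonneg dy) :
        dx^2 ≤ dx^2 + dy^2)
      rwa [Real.sqrt_sq hdxpos.le] at h2
    calc dx ≤ Real.sqrt (dx^2 + dy^2) := h1
      _ = dist (u k) (u 0) := hdistval.symm
      _ ≤ C * (n:ℝ) ^ ((3:ℝ)/4 - ε/2) := hdist.2.le
  have hheight : τ * (dx^2 + dy^2) / (2*dx) ≤ hgt := by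
    rw [div_le_iff₀ (by linarith)]
    have h1 : dx^2 + dy^2 ≤ (1+κ^2) * dx^2 := by
      have hp := mul_nonneg (sub_nonneg.2 hdyκ)
        (add_nonneg (mul_nonneg hκpos.le hdxpos.le) hdypos.le)
      linarith [hp]
    have hexp : (n:ℝ) ^ (-(1:ℝ)/4 - ε/2) * (n:ℝ) ^ ((3:ℝ)/4 - ε/2)
        = (n:ℝ) ^ ((1:ℝ)/2 - ε) := by
      rw [← Real.rpow_add npos]
      congr 1
      ring
    have hexp2 : (n:ℝ) ^ (ε/2) * (n:ℝ) ^ ((1:ℝ)/2 - ε) = hgt := by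
      rw [hhdef, ← Real.rpow_add npos]
      congr 1
      ring
    have hne : (0:ℝ) < (n:ℝ) ^ ((1:ℝ)/2 - ε) := Real.rpow_pos_of_pos npos _
    have hkey : τ * ((1+κ^2) * (C * (n:ℝ) ^ ((3:ℝ)/4 - ε/2))) ≤ 2 * hgt := by
      have he : τ * ((1+κ^2) * (C * (n:ℝ) ^ ((3:ℝ)/4 - ε/2)))
          = 2 * ((100*C^3*(1+κ^2)) *
            ((n:ℝ) ^ (-(1:ℝ)/4 - ε/2) * (n:ℝ) ^ ((3:ℝ)/4 - ε/2))) := by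
        rw [hτdef, hδdef]
        ring
      rw [he, hexp, ← hexp2]
      have := mul_le_mul_of_nonneg_right hP2 hne.le
      linarith
    -- combine: τ(dx²+dy²) ≤ τ(1+κ²)dx² ≤ τ(1+κ²)dx·Cn^a ≤ 2 hgt dx
    have h2 : τ * (dx^2 + dy^2) ≤ τ * ((1+κ^2) * dx^2) :=
      mul_le_mul_of_nonneg_left h1 hτpos.le
    have h4 : (1+κ^2) * dx ≤ (1+κ^2) * (C * (n:ℝ) ^ ((3:ℝ)/4 - ε/2)) :=
      mul_le_mul_of_nonneg_left hdxC (by positivity)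
    have h3 : τ * ((1+κ^2) * dx^2) ≤ τ * ((1+κ^2) * (C * (n:ℝ) ^ ((3:ℝ)/4 - ε/2))) * dx := by
      have h3a := mul_le_mul_of_nonneg_right
        (mul_le_mul_of_nonneg_left h4 hτpos.le) hdxpos.le
      calc τ * ((1+κ^2) * dx^2) = τ * ((1+κ^2) * dx) * dx := by ring
        _ ≤ τ * ((1+κ^2) * (C * (n:ℝ) ^ ((3:ℝ)/4 - ε/2))) * dx := h3a
    have h5 := mul_le_mul_of_nonneg_right hkey hdxpos.le
    calc τ * (dx^2 + dy^2) ≤ τ * ((1+κ^2) * dx^2) := h2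
      _ ≤ τ * ((1+κ^2) * (C * (n:ℝ) ^ ((3:ℝ)/4 - ε/2))) * dx := h3
      _ ≤ 2 * hgt * dx := h5
      _ = hgt * (2*dx) := by ring
  -- S lies in the parallelogram
  have hSpara : S ∈ para (u 0) (u k) hgt := by
    refine ⟨1/2 - τ*dy/(2*dx), ⟨?_, ?_⟩, τ*(dx^2+dy^2)/(2*dx),
      ⟨by positivity, hheight⟩, ?_⟩
    · rw [sub_nonneg, div_le_iff₀ (by linarith : (0:ℝ) < 2*dx)]
      linarith [hτdy]
    · have h0 : 0 ≤ τ*dy/(2*dx) := by positivity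
      linarith
    · ext j
      fin_cases j
      · simp only [PiLp.add_apply, PiLp.smul_apply, PiLp.sub_apply,
          EuclideanSpace.single_apply, smul_eq_mul]
        rw [show ((⟨0, by omega⟩ : Fin 2)) = (0 : Fin 2) from rfl, hS0]
        rw [← hdxdef]
        rw [if_neg (by decide)]
        simp only [hvxdef]
        field_simp
        ring
      · simp only [PiLp.add_apply, PiLp.smul_apply, PiLp.sub_apply,
          EuclideanSpace.single_apply, smul_eq_mul]
        rw [show ((⟨1, by omega⟩ : Fin 2)) = (1 : Fin 2) from rfl, hS1]
        rw [← hdydef]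
        rw [if_pos (by decide)]
        simp only [hvydef]
        field_simp
        ring
  -- isosceles
  have hiso : dist S (u 0) = dist S (u k) := by
    rw [EuclideanSpace.dist_eq, EuclideanSpace.dist_eq]
    congr 1
    rw [Fin.sum_univ_two, Fin.sum_univ_two]
    simp only [Real.dist_eq, sq_abs, hS0, hS1]
    have e0 : u k 0 = u 0 0 + dx := by rw [hdxdef]; ring
    have e1 : u k 1 = u 0 1 + dy := by rw [hdydef]; ring
    rw [e0, e1, hvxdef, hvydef]
    ring
  -- triangle inside parallelogram
  have hApara : u 0 ∈ para (u 0) (u k) hgt :=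
    ⟨0, ⟨le_rfl, zero_le_one⟩, 0, ⟨le_rfl, hhgt0⟩, by module⟩
  have hBpara : u k ∈ para (u 0) (u k) hgt :=
    ⟨1, ⟨zero_le_one, le_rfl⟩, 0, ⟨le_rfl, hhgt0⟩, by module⟩
  have htri : convexHull ℝ {u 0, u k, S} ⊆ para (u 0) (u k) hgt := by
    apply convexHull_min ?_ (para_convex _ _ _)
    rintro p hp
    simp only [Set.mem_insert_iff, Set.mem_singleton_iff] at hp
    rcases hp with rfl | rfl | rfl
    exacts [hApara, hBpara, hSpara]
  refine ⟨S, hSpara, hiso, htri, ?_⟩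
  -- the chain is inside the triangle
  intro p hp
  simp only [Set.mem_iUnion] at hp
  obtain ⟨i, hi, hpseg⟩ := hp
  have hik : i < k := mem_range.1 hi
  obtain ⟨c1, c2, hc1, hc2, hc12, rfl⟩ := hpseg
  have hp0 : (c1 • u i + c2 • u (i+1)) 0 = c1 * u i 0 + c2 * u (i+1) 0 := by
    simp [PiLp.add_apply, PiLp.smul_apply, smul_eq_mul]
  have hp1 : (c1 • u i + c2 • u (i+1)) 1 = c1 * u i 1 + c2 * u (i+1) 1 := by
    simp [PiLp.add_apply, PiLp.smul_apply, smul_eq_mul]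
  obtain ⟨p0, hp0def⟩ : ∃ x : ℝ, x = c1 * u i 0 + c2 * u (i+1) 0 := ⟨_, rfl⟩
  obtain ⟨p1, hp1def⟩ : ∃ x : ℝ, x = c1 * u i 1 + c2 * u (i+1) 1 := ⟨_, rfl⟩
  have hc2' : c2 = 1 - c1 := by linarith
  have hFp : 0 ≤ dx*(p1 - u 0 1) - dy*(p0 - u 0 0) := by
    have e : dx*(p1 - u 0 1) - dy*(p0 - u 0 0) = c1 * F i + c2 * F (i+1) := by
      simp only [hFdef, hp0def, hp1def, hc2']
      ring
    rw [e]
    exact add_nonneg (mul_nonneg hc1 (hFnn i hik.le)) (mul_nonneg hc2 (hFnn (i+1) hik))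
  have hGp : 0 ≤ (p0 - u 0 0)*vy - (p1 - u 0 1)*vx := by
    have e : (p0 - u 0 0)*vy - (p1 - u 0 1)*vx = c1 * G i + c2 * G (i+1) := by
      simp only [hGdef, hp0def, hp1def, hc2']
      ring
    rw [e]
    exact add_nonneg (mul_nonneg hc1 (hGnn i hik.le)) (mul_nonneg hc2 (hGnn (i+1) hik))
  have hHp : ((p0 - u 0 0)*vy - (p1 - u 0 1)*vx) + (dx*(p1 - u 0 1) - dy*(p0 - u 0 0))
      ≤ dx*vy - dy*vx := by
    have e : ((p0 - u 0 0)*vy - (p1 - u 0 1)*vx) + (dx*(p1 - u 0 1) - dy*(p0 - u 0 0))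
        = c1 * (G i + F i) + c2 * (G (i+1) + F (i+1)) := by
      simp only [hFdef, hGdef, hp0def, hp1def, hc2']
      ring
    rw [e]
    have h1 := hHle i hik.le
    have h2 := hHle (i+1) hik
    rw [hGk, hFk] at h1 h2
    have h3 := mul_le_mul_of_nonneg_left h1 hc1
    have h4 := mul_le_mul_of_nonneg_left h2 hc2
    have h5 : c1*(dx*vy - dy*vx) + c2*(dx*vy - dy*vx) = dx*vy - dy*vx := by
      rw [hc2']; ring
    linarith
  obtain ⟨β, hβdef⟩ : ∃ x : ℝ, x = ((p0 - u 0 0)*vy - (p1 - u 0 1)*vx) / (dx*vy - dy*vx) :=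
    ⟨_, rfl⟩
  obtain ⟨γ, hγdef⟩ : ∃ x : ℝ, x = (dx*(p1 - u 0 1) - dy*(p0 - u 0 0)) / (dx*vy - dy*vx) :=
    ⟨_, rfl⟩
  have hβ0 : 0 ≤ β := hβdef ▸ div_nonneg hGp hDpos.le
  have hγ0 : 0 ≤ γ := hγdef ▸ div_nonneg hFp hDpos.le
  have hβγ : β + γ ≤ 1 := by
    rw [hβdef, hγdef, ← add_div, div_le_one hDpos]
    exact hHp
  have hrepr : c1 • u i + c2 • u (i+1) = (1-β-γ) • u 0 + β • u k + γ • S := by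
    have hDne : dx*vy - dy*vx ≠ 0 := ne_of_gt hDpos
    ext j
    fin_cases j
    · simp only [PiLp.add_apply, PiLp.smul_apply, smul_eq_mul]
      rw [show ((⟨0, by omega⟩ : Fin 2)) = (0 : Fin 2) from rfl, hS0]
      have e0 : u k 0 = u 0 0 + dx := by rw [hdxdef]; ring
      rw [e0, ← hp0def, hβdef, hγdef]
      linear_combination (-(p0 - u 0 0)) * mul_inv_cancel₀ hDne
    · simp only [PiLp.add_apply, PiLp.smul_apply, smul_eq_mul]
      rw [show ((⟨1, by omega⟩ : Fin 2)) = (1 : Fin 2) from rfl, hS1]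
      have e1 : u k 1 = u 0 1 + dy := by rw [hdydef]; ring
      rw [e1, ← hp1def, hβdef, hγdef]
      linear_combination (-(p1 - u 0 1)) * mul_inv_cancel₀ hDne
  have hcm : (Finset.univ : Finset (Fin 3)).centerMass ![1-β-γ, β, γ] ![u 0, u k, S]
      = (1-β-γ) • u 0 + β • u k + γ • S := by
    rw [Finset.centerMass, Fin.sum_univ_three, Fin.sum_univ_three]
    simp only [Matrix.cons_val_zero, Matrix.cons_val_one, Matrix.head_cons,
      Matrix.cons_val_two, Matrix.tail_cons]
    rw [show (1-β-γ) + β + γ = (1:ℝ) by ring, inv_one, one_smul]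
  rw [hrepr, ← hcm]
  apply Finset.centerMass_mem_convexHull
  · intro j _
    fin_cases j <;> simp <;> linarith
  · rw [Fin.sum_univ_three]
    simp only [Matrix.cons_val_zero, Matrix.cons_val_one, Matrix.head_cons,
      Matrix.cons_val_two, Matrix.tail_cons]
    linarith
  · intro j _
    fin_cases j <;>
      simp [Matrix.cons_val_zero, Matrix.cons_val_one, Matrix.head_cons,
        Matrix.cons_val_two, Matrix.tail_cons]
end
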